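/- arXiv:math/0407372 — 7 statements merged into one kernel-verified Lean document; each statement's English description precedes it below -/
import Mathlib

section
/- For every integer m ≥ 1, every 0 ≤ i ≤ m−1, and every s ≥ 0, the identity Σ_{a+b=s, a,b ≥ 0} (a)_i (b)_i ξ̃_a ξ̃_b = 0 holds in the exterior algebra Λ, where (a)_i = a(a−1)⋯(a−i+1) is the falling factorial. (Equivalently, (ξ̃(z)^{(i)})^2 = 0 for ξ̃(z) = Σ_{n≥0} ξ̃_n z^n and 0 ≤ i ≤ m−1.) -/
/-- `ξ̃_n = Σ_{β_1+⋯+β_{2m} = n} e_{(1,β_1)} ∧ e_{(2,β_2)} ∧ ⋯ ∧ e_{(2m,β_{2m})}`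
in the exterior algebra of the free ℂ-vector space on `Fin (2m) × ℕ`. -/
noncomputable def xitilde (m n : ℕ) : ExteriorAlgebra ℂ ((Fin (2 * m) × ℕ) →₀ ℂ) :=
  ∑ β ∈ (Fintype.piFinset fun _ : Fin (2 * m) => Finset.range (n + 1)).filter
      (fun β => ∑ s, β s = n),
    ((List.finRange (2 * m)).map
      (fun s => ExteriorAlgebra.ι ℂ (Finsupp.single (s, β s) (1 : ℂ)))).prod

open Finset Polynomial

namespace Stmt4


variable {M : Type*} [AddCommGroup M] [Module ℂ M]

local notation "ιC" => ExteriorAlgebra.ι ℂ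

lemma iota_anticomm (x y : M) : ιC x * ιC y = -(ιC y * ιC x) :=
  eq_neg_of_add_eq_zero_left (ExteriorAlgebra.ι_add_mul_swap x y)

lemma iota_mul_list (z : M) (l : List M) :
    ιC z * (l.map ιC).prod = (-1 : ℂ) ^ l.length • ((l.map ιC).prod * ιC z) := by
  induction l with
  | nil => simp
  | cons a t ih =>
    simp only [List.map_cons, List.prod_cons, List.length_cons]
    rw [← mul_assoc, iota_anticomm, neg_mul, mul_assoc, ih, pow_succ]
    simp [mul_smul_comm, smul_smul, mul_comm]
    rw [mul_assoc]

lemma mid_swap (x y : M) (l : List M) :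
    ιC y * ((l.map ιC).prod * ιC x) = -(ιC x * ((l.map ιC).prod * ιC y)) := by
  rw [← mul_assoc, iota_mul_list y l, ← mul_assoc, iota_mul_list x l]
  rw [smul_mul_assoc, smul_mul_assoc, mul_assoc, mul_assoc, iota_anticomm]
  simp

/-- the basis vector `e_{(t, k)}`. -/
noncomputable def ee {N : ℕ} (t : Fin N) (k : ℕ) : (Fin N × ℕ) →₀ ℂ :=
  Finsupp.single (t, k) (1 : ℂ)

noncomputable def w (N : ℕ) (β : Fin N → ℕ) : ExteriorAlgebra ℂ ((Fin N × ℕ) →₀ ℂ) :=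
  ((List.finRange N).map fun t => ExteriorAlgebra.ι ℂ (Finsupp.single (t, β t) (1 : ℂ))).prod

lemma w_list (N : ℕ) (β : Fin N → ℕ) :
    w N β = (((List.finRange N).map (fun t => ee t (β t))).map ιC).prod := by
  rw [w, List.map_map]; rfl

lemma w_single_swap {N : ℕ} (t : Fin N) (β γ : Fin N → ℕ) :
    w N (Function.update β t (γ t)) * w N (Function.update γ t (β t)) = -(w N β * w N γ) := by
  obtain ⟨A, B, hAB⟩ := List.append_of_mem (List.mem_finRange t)
  have hnd : (A ++ t :: B).Nodup := hAB ▸ List.nodup_finRange N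
  have htA : t ∉ A := fun h => (List.nodup_append'.mp hnd).2.2 h List.mem_cons_self
  have htB : t ∉ B := (List.nodup_cons.mp (List.nodup_append.mp hnd).2.1).1
  -- expression of w as a product split at position t
  have hsplit : ∀ δ : Fin N → ℕ,
      w N δ = ((A.map (fun u => ee u (δ u))).map ιC).prod *
        (ιC (ee t (δ t)) * ((B.map (fun u => ee u (δ u))).map ιC).prod) := by
    intro δ
    rw [w_list, hAB]
    simp only [List.map_append, List.map_cons, List.prod_append, List.prod_cons, mul_assoc]
  have hA : ∀ (δ : Fin N → ℕ) (x : ℕ),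
      A.map (fun u => ee u (Function.update δ t x u)) = A.map (fun u => ee u (δ u)) :=
    fun δ x => List.map_congr_left fun u hu => by
      have hut : u ≠ t := fun h => htA (by rwa [h] at hu)
      rw [Function.update_of_ne hut]
  have hB : ∀ (δ : Fin N → ℕ) (x : ℕ),
      B.map (fun u => ee u (Function.update δ t x u)) = B.map (fun u => ee u (δ u)) :=
    fun δ x => List.map_congr_left fun u hu => by
      have hut : u ≠ t := fun h => htB (by rwa [h] at hu)
      rw [Function.update_of_ne hut]
  set PAβ := ((A.map (fun u => ee u (β u))).map ιC).prod with hPAβ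
  set PBβ := ((B.map (fun u => ee u (β u))).map ιC).prod with hPBβ
  set PAγ := ((A.map (fun u => ee u (γ u))).map ιC).prod with hPAγ
  set PBγ := ((B.map (fun u => ee u (γ u))).map ιC).prod with hPBγ
  have h1 : w N (Function.update β t (γ t)) = PAβ * (ιC (ee t (γ t)) * PBβ) := by
    rw [hsplit, hA, hB, Function.update_self]
  have h2 : w N (Function.update γ t (β t)) = PAγ * (ιC (ee t (β t)) * PBγ) := by
    rw [hsplit, hA, hB, Function.update_self]
  have hwβ : w N β = PAβ * (ιC (ee t (β t)) * PBβ) := hsplit β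
  have hwγ : w N γ = PAγ * (ιC (ee t (γ t)) * PBγ) := hsplit γ
  have core : ιC (ee t (γ t)) * ((PBβ * PAγ) * ιC (ee t (β t)))
      = -(ιC (ee t (β t)) * ((PBβ * PAγ) * ιC (ee t (γ t)))) := by
    have := mid_swap (ee t (β t)) (ee t (γ t))
      ((B.map (fun u => ee u (β u))) ++ (A.map (fun u => ee u (γ u))))
    simpa only [List.map_append, List.prod_append] using this
  have expand : ∀ x y : (Fin N × ℕ) →₀ ℂ,
      PAβ * (ιC x * PBβ) * (PAγ * (ιC y * PBγ))
        = PAβ * ((ιC x * ((PBβ * PAγ) * ιC y)) * PBγ) := by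
    intro x y; simp only [mul_assoc]
  rw [h1, h2, hwβ, hwγ, expand, expand, core]
  simp only [neg_mul, mul_neg]

def swapP {N : ℕ} (T : Finset (Fin N)) (q : (Fin N → ℕ) × (Fin N → ℕ)) :
    (Fin N → ℕ) × (Fin N → ℕ) :=
  (fun t => if t ∈ T then q.2 t else q.1 t, fun t => if t ∈ T then q.1 t else q.2 t)

lemma swapP_involutive {N : ℕ} (T : Finset (Fin N)) (q : (Fin N → ℕ) × (Fin N → ℕ)) :
    swapP T (swapP T q) = q := by
  unfold swapP
  refine Prod.ext (funext fun u => ?_) (funext fun u => ?_) <;> by_cases hu : u ∈ T <;> simp [hu]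

lemma w_swapP {N : ℕ} (T : Finset (Fin N)) (q : (Fin N → ℕ) × (Fin N → ℕ)) :
    w N (swapP T q).1 * w N (swapP T q).2
      = (-1 : ℂ) ^ T.card • (w N q.1 * w N q.2) := by
  classical
  induction T using Finset.induction with
  | empty => simp [swapP]
  | @insert t T ht ih =>
    have h1 : (swapP (insert t T) q).1
        = Function.update (swapP T q).1 t ((swapP T q).2 t) := by
      funext u
      by_cases hu : u = t
      · subst hu; simp [swapP, ht]
      · simp [swapP, Function.update_of_ne hu, Finset.mem_insert, hu]
    have h2 : (swapP (insert t T) q).2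
        = Function.update (swapP T q).2 t ((swapP T q).1 t) := by
      funext u
      by_cases hu : u = t
      · subst hu; simp [swapP, ht]
      · simp [swapP, Function.update_of_ne hu, Finset.mem_insert, hu]
    rw [h1, h2, w_single_swap, ih, Finset.card_insert_of_notMem ht, pow_succ]
    simp [mul_comm]



lemma deg_step (P : ℂ[X]) (c : ℂ) {n : ℕ} (h : P.degree < (n + 1 : ℕ)) :
    (P - P.comp (X + C c)).degree < (n : ℕ) := by
  by_cases h0 : P.natDegree = 0
  · have hP : P = C (P.coeff 0) := eq_C_of_natDegree_eq_zero h0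
    rw [hP]
    simp only [C_comp, sub_self, degree_zero]
    exact WithBot.bot_lt_coe n
  · have hP0 : P ≠ 0 := fun h' => h0 (by simp [h'])
    have hq : (X + C c : ℂ[X]).natDegree = 1 := natDegree_X_add_C c
    have hlc : (P.comp (X + C c)).leadingCoeff = P.leadingCoeff := by
      rw [leadingCoeff_comp (by rw [hq]; exact one_ne_zero), leadingCoeff_X_add_C, one_pow,
        mul_one]
    have hnd : (P.comp (X + C c)).natDegree = P.natDegree := by
      rw [natDegree_comp, hq, mul_one]
    have hcomp0 : P.comp (X + C c) ≠ 0 := fun h' =>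
      hP0 (leadingCoeff_eq_zero.mp (by rw [← hlc, h', leadingCoeff_zero]))
    have hdeg : P.degree = (P.comp (X + C c)).degree := by
      rw [degree_eq_natDegree hP0, degree_eq_natDegree hcomp0, hnd]
    have hlt := degree_sub_lt hdeg hP0 hlc.symm
    refine lt_of_lt_of_le hlt ?_
    rw [degree_eq_natDegree hP0]
    have : P.natDegree ≤ n := by
      have := h
      rw [degree_eq_natDegree hP0] at this
      exact_mod_cast Nat.lt_succ_iff.mp (by exact_mod_cast this)
    exact_mod_cast this

lemma alt_sum : ∀ (n : ℕ) (P : ℂ[X]), P.degree < (n : ℕ) → ∀ (d : Fin n → ℂ) (x : ℂ),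
    ∑ ε : Fin n → Bool,
      ((∏ t, if ε t then (-1 : ℂ) else 1) * P.eval (x + ∑ t, if ε t then d t else 0)) = 0 := by
  intro n
  induction n with
  | zero =>
    intro P hP d x
    have hP0 : P = 0 := by
      by_contra h
      rw [degree_eq_natDegree h] at hP
      exact absurd (by exact_mod_cast hP) (Nat.not_lt_zero _)
    simp [hP0]
  | succ n ih =>
    intro P hP d x
    rw [← Equiv.sum_comp (Fin.consEquiv (fun _ : Fin (n + 1) => Bool))]
    rw [Fintype.sum_prod_type, Fintype.sum_bool]
    simp only [Fin.consEquiv_apply, Fin.prod_univ_succ, Fin.sum_univ_succ, Fin.cons_zero,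
      Fin.cons_succ, if_true, if_false]
    rw [← Finset.sum_add_distrib]
    refine Eq.trans ?_ (ih (P - P.comp (X + C (d 0))) (deg_step P (d 0) hP)
      (fun t => d t.succ) x)
    refine Finset.sum_congr rfl fun ε _ => ?_
    have hev : ∀ y : ℂ, (P - P.comp (X + C (d 0))).eval y = P.eval y - P.eval (y + d 0) := by
      intro y; simp [eval_comp]
    rw [hev]
    simp only [Bool.false_eq_true, if_false, if_true]
    ring_nf

noncomputable def boolEquiv (n : ℕ) : (Fin n → Bool) ≃ Finset (Fin n) where
  toFun ε := Finset.univ.filter fun t => ε t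
  invFun T := fun t => decide (t ∈ T)
  left_inv ε := by
    funext t
    by_cases h : ε t = true <;> simp [h]
  right_inv T := by
    ext t
    simp

lemma alt_sum_finset (n : ℕ) (P : ℂ[X]) (hP : P.degree < (n : ℕ)) (d : Fin n → ℂ) (x : ℂ) :
    ∑ T : Finset (Fin n), (-1 : ℂ) ^ T.card * P.eval (x + ∑ t ∈ T, d t) = 0 := by
  rw [← Equiv.sum_comp (boolEquiv n)
    (fun T => (-1 : ℂ) ^ T.card * P.eval (x + ∑ t ∈ T, d t))]
  refine Eq.trans ?_ (alt_sum n P hP d x)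
  refine Finset.sum_congr rfl fun ε _ => ?_
  have hcard : ((boolEquiv n) ε).card = (Finset.univ.filter fun t => ε t).card := rfl
  have hpow : (-1 : ℂ) ^ ((boolEquiv n) ε).card = ∏ t, if ε t then (-1 : ℂ) else 1 := by
    rw [hcard, ← Finset.prod_const, Finset.prod_filter]
  have hsum : ∑ t ∈ (boolEquiv n) ε, d t = ∑ t, if ε t then d t else 0 := by
    exact Finset.sum_filter _ _
  rw [hpow, hsum]

lemma main_aux (N : ℕ) (i : ℕ) (hi : 2 * i < N) (s : ℕ) :
    ∑ q ∈ ((Fintype.piFinset fun _ : Fin N => Finset.range (s + 1)) ×ˢ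
        (Fintype.piFinset fun _ : Fin N => Finset.range (s + 1))).filter
          (fun q => ((∑ t, q.1 t) + ∑ t, q.2 t) = s),
      (((∑ t, q.1 t).descFactorial i * (∑ t, q.2 t).descFactorial i : ℕ) : ℂ) •
        (w N q.1 * w N q.2) = 0 := by
  classical
  set Φ : Finset (Fin N → ℕ) := Fintype.piFinset fun _ : Fin N => Finset.range (s + 1) with hΦ
  set J : Finset ((Fin N → ℕ) × (Fin N → ℕ)) :=
    (Φ ×ˢ Φ).filter (fun q => ((∑ t, q.1 t) + ∑ t, q.2 t) = s) with hJ
  set F : ((Fin N → ℕ) × (Fin N → ℕ)) → ExteriorAlgebra ℂ ((Fin N × ℕ) →₀ ℂ) :=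
    fun q => (((∑ t, q.1 t).descFactorial i * (∑ t, q.2 t).descFactorial i : ℕ) : ℂ) •
      (w N q.1 * w N q.2) with hF
  show ∑ q ∈ J, F q = 0
  have hswap_mem : ∀ (T : Finset (Fin N)), ∀ q ∈ J, swapP T q ∈ J := by
    intro T q hq
    rw [hJ, Finset.mem_filter, Finset.mem_product] at hq ⊢
    obtain ⟨⟨h1, h2⟩, h3⟩ := hq
    rw [hΦ, Fintype.mem_piFinset] at h1 h2
    have hsum : (∑ t, (swapP T q).1 t) + ∑ t, (swapP T q).2 t
        = (∑ t, q.1 t) + ∑ t, q.2 t := by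
      rw [← Finset.sum_add_distrib, ← Finset.sum_add_distrib]
      refine Finset.sum_congr rfl fun t _ => ?_
      by_cases ht : t ∈ T <;> simp [swapP, ht, Nat.add_comm]
    refine ⟨⟨?_, ?_⟩, by rw [hsum]; exact h3⟩ <;>
      [skip; skip] <;> rw [hΦ, Fintype.mem_piFinset] <;> intro t <;>
      by_cases ht : t ∈ T <;> simp only [swapP, ht, if_true, if_false] <;>
      first | exact h1 t | exact h2 t
  have key : ∀ T : Finset (Fin N), ∑ q ∈ J, F q = ∑ q ∈ J, F (swapP T q) :=
    fun T => Finset.sum_nbij' (swapP T) (swapP T) (hswap_mem T) (hswap_mem T)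
      (fun q _ => swapP_involutive T q) (fun q _ => swapP_involutive T q)
      (fun q _ => (congrArg F (swapP_involutive T q)).symm)
  have hFswap : ∀ (T : Finset (Fin N)) (q : (Fin N → ℕ) × (Fin N → ℕ)),
      F (swapP T q) = ((-1 : ℂ) ^ T.card *
        (((∑ t, (swapP T q).1 t).descFactorial i *
          (∑ t, (swapP T q).2 t).descFactorial i : ℕ) : ℂ)) • (w N q.1 * w N q.2) := by
    intro T q
    rw [hF]
    simp only
    rw [w_swapP T q, smul_smul, mul_comm]
  have hcard : ∑ T : Finset (Fin N), ∑ q ∈ J, F q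
      = (Fintype.card (Finset (Fin N))) • ∑ q ∈ J, F q := by
    rw [Finset.sum_const, Finset.card_univ]
  have hzero : ∀ q ∈ J, ∑ T : Finset (Fin N),
      ((-1 : ℂ) ^ T.card *
        (((∑ t, (swapP T q).1 t).descFactorial i *
          (∑ t, (swapP T q).2 t).descFactorial i : ℕ) : ℂ)) = 0 := by
    intro q hq
    have hab : ∀ T : Finset (Fin N),
        (∑ t, (swapP T q).1 t) + (∑ t, (swapP T q).2 t) = s := by
      intro T
      have hmem := hswap_mem T q hq
      rw [hJ, Finset.mem_filter] at hmem
      exact hmem.2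
    set x0 : ℂ := ∑ t, (q.1 t : ℂ) with hx0
    set d : Fin N → ℂ := fun t => (q.2 t : ℂ) - q.1 t with hd
    set G : ℂ[X] := descPochhammer ℂ i * (descPochhammer ℂ i).comp (C (s : ℂ) - X) with hG
    have hPmon : (descPochhammer ℂ i).Monic := monic_descPochhammer ℂ i
    have hPdeg : (descPochhammer ℂ i).degree = (i : ℕ) := by
      rw [degree_eq_natDegree hPmon.ne_zero, descPochhammer_natDegree]
    have hlin : (C (s : ℂ) - X).natDegree = 1 := by
      rw [show (C (s : ℂ) - X) = -(X - C (s : ℂ)) by ring, natDegree_neg, natDegree_X_sub_C]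
    have hlinne : (C (s : ℂ) - X).natDegree ≠ 0 := by rw [hlin]; exact one_ne_zero
    have hc0 : (descPochhammer ℂ i).comp (C (s : ℂ) - X) ≠ 0 := by
      intro h
      have hl := leadingCoeff_comp (p := descPochhammer ℂ i) hlinne
      rw [h, leadingCoeff_zero, hPmon.leadingCoeff, one_mul,
        show (C (s : ℂ) - X) = -(X - C (s : ℂ)) by ring, leadingCoeff_neg,
        leadingCoeff_X_sub_C] at hl
      exact pow_ne_zero _ (neg_ne_zero.mpr (one_ne_zero (α := ℂ))) hl.symm
    have hcompdeg : ((descPochhammer ℂ i).comp (C (s : ℂ) - X)).degree = (i : ℕ) := by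
      rw [degree_eq_natDegree hc0, natDegree_comp, hlin, mul_one, descPochhammer_natDegree]
    have hGdeg : G.degree < (N : ℕ) := by
      rw [hG, degree_mul, hPdeg, hcompdeg, ← Nat.cast_add]
      exact_mod_cast (by omega : i + i < N)
    have hcasta : ∀ T : Finset (Fin N),
        ((∑ t, (swapP T q).1 t : ℕ) : ℂ) = x0 + ∑ t ∈ T, d t := by
      intro T
      rw [Nat.cast_sum]
      have hpt : ∀ t : Fin N, (((swapP T q).1 t : ℕ) : ℂ)
          = (q.1 t : ℂ) + (if t ∈ T then ((q.2 t : ℂ) - q.1 t) else 0) := by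
        intro t
        by_cases ht : t ∈ T <;> simp [swapP, ht]
      rw [Finset.sum_congr rfl (fun t _ => hpt t), Finset.sum_add_distrib]
      congr 1
      rw [hd, Finset.sum_ite_mem, Finset.univ_inter]
    have hbc : ∀ T : Finset (Fin N),
        (s : ℂ) - ((∑ t, (swapP T q).1 t : ℕ) : ℂ) = ((∑ t, (swapP T q).2 t : ℕ) : ℂ) := by
      intro T
      have := hab T
      have hcast : ((∑ t, (swapP T q).1 t : ℕ) : ℂ) + ((∑ t, (swapP T q).2 t : ℕ) : ℂ)
          = (s : ℂ) := by exact_mod_cast congrArg (Nat.cast : ℕ → ℂ) this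
      linear_combination -hcast
    refine Eq.trans ?_ (alt_sum_finset N G hGdeg d x0)
    refine Finset.sum_congr rfl fun T _ => ?_
    congr 1
    rw [← hcasta T]
    rw [Nat.cast_mul, hG, eval_mul, eval_comp, eval_sub, eval_C, eval_X,
      descPochhammer_eval_eq_descFactorial, hbc T, descPochhammer_eval_eq_descFactorial]
  have htotal : (Fintype.card (Finset (Fin N))) • (∑ q ∈ J, F q) = 0 := by
    rw [← hcard]
    calc ∑ T : Finset (Fin N), ∑ q ∈ J, F q
        = ∑ T : Finset (Fin N), ∑ q ∈ J, ((-1 : ℂ) ^ T.card *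
            (((∑ t, (swapP T q).1 t).descFactorial i *
              (∑ t, (swapP T q).2 t).descFactorial i : ℕ) : ℂ)) • (w N q.1 * w N q.2) := by
          refine Finset.sum_congr rfl fun T _ => ?_
          rw [key T]
          exact Finset.sum_congr rfl fun q _ => hFswap T q
      _ = ∑ q ∈ J, (∑ T : Finset (Fin N), ((-1 : ℂ) ^ T.card *
            (((∑ t, (swapP T q).1 t).descFactorial i *
              (∑ t, (swapP T q).2 t).descFactorial i : ℕ) : ℂ))) • (w N q.1 * w N q.2) := by
          rw [Finset.sum_comm]
          exact Finset.sum_congr rfl fun q _ => (Finset.sum_smul).symm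
      _ = 0 := by
          refine Finset.sum_eq_zero fun q hq => ?_
          rw [hzero q hq, zero_smul]
  have hcne : ((Fintype.card (Finset (Fin N)) : ℕ) : ℂ) ≠ 0 := by
    exact Nat.cast_ne_zero.mpr Fintype.card_ne_zero
  rw [← Nat.cast_smul_eq_nsmul ℂ] at htotal
  rcases smul_eq_zero.mp htotal with h | h
  · exact absurd h hcne
  · exact h


lemma xitilde_eq (m s a : ℕ) (ha : a ≤ s) :
    xitilde m a = ∑ β ∈ (Fintype.piFinset fun _ : Fin (2 * m) => Finset.range (s + 1)).filter
      (fun β => ∑ t, β t = a), w (2 * m) β := by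
  rw [xitilde]
  refine Finset.sum_congr ?_ (fun β _ => rfl)
  ext β
  simp only [Finset.mem_filter, Fintype.mem_piFinset, Finset.mem_range, Nat.lt_succ_iff]
  constructor
  · rintro ⟨h1, h2⟩
    exact ⟨fun t => (h1 t).trans ha, h2⟩
  · rintro ⟨h1, h2⟩
    refine ⟨fun t => ?_, h2⟩
    exact le_of_le_of_eq (Finset.single_le_sum (f := β)
      (fun _ _ => Nat.zero_le _) (Finset.mem_univ t)) h2


end Stmt4

/-- For `0 ≤ i ≤ m-1` and `s ≥ 0`,
`Σ_{a+b=s} (a)_i (b)_i ξ̃_a ξ̃_b = 0`, i.e. `(ξ̃(z)^{(i)})^2 = 0`. -/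
theorem statement4 (m : ℕ) (hm : 1 ≤ m) (i : ℕ) (hi : i < m) (s : ℕ) :
    ∑ p ∈ Finset.HasAntidiagonal.antidiagonal s,
      ((p.1.descFactorial i * p.2.descFactorial i : ℕ) : ℂ) •
        (xitilde m p.1 * xitilde m p.2) = 0 := by
  classical
  set N := 2 * m with hN
  set Φ : Finset (Fin N → ℕ) := Fintype.piFinset fun _ : Fin N => Finset.range (s + 1) with hΦ
  set J : Finset ((Fin N → ℕ) × (Fin N → ℕ)) :=
    (Φ ×ˢ Φ).filter (fun q => ((∑ t, q.1 t) + ∑ t, q.2 t) = s) with hJ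
  have haux := Stmt4.main_aux N i (by omega) s
  have hmaps : ∀ q ∈ J, ((∑ t, q.1 t), (∑ t, q.2 t)) ∈ Finset.HasAntidiagonal.antidiagonal s := by
    intro q hq
    rw [hJ, Finset.mem_filter] at hq
    exact Finset.HasAntidiagonal.mem_antidiagonal.mpr hq.2
  have hfib := Finset.sum_fiberwise_of_maps_to hmaps
    (fun q => (((∑ t, q.1 t).descFactorial i * (∑ t, q.2 t).descFactorial i : ℕ) : ℂ) •
      (Stmt4.w N q.1 * Stmt4.w N q.2))
  rw [haux] at hfib
  rw [← hfib]
  refine Finset.sum_congr rfl fun p hp => ?_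
  have hp' := Finset.HasAntidiagonal.mem_antidiagonal.mp hp
  have hfilter : J.filter (fun q => ((∑ t, q.1 t), (∑ t, q.2 t)) = p)
      = (Φ.filter fun β => ∑ t, β t = p.1) ×ˢ (Φ.filter fun γ => ∑ t, γ t = p.2) := by
    ext q
    constructor
    · intro h
      rw [Finset.mem_filter] at h
      obtain ⟨hqJ, hpair⟩ := h
      rw [hJ, Finset.mem_filter, Finset.mem_product] at hqJ
      have h1 : ∑ t, q.1 t = p.1 := congrArg Prod.fst hpair
      have h2 : ∑ t, q.2 t = p.2 := congrArg Prod.snd hpair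
      rw [Finset.mem_product, Finset.mem_filter, Finset.mem_filter]
      exact ⟨⟨hqJ.1.1, h1⟩, hqJ.1.2, h2⟩
    · intro h
      rw [Finset.mem_product, Finset.mem_filter, Finset.mem_filter] at h
      obtain ⟨⟨hq1, h1⟩, hq2, h2⟩ := h
      rw [Finset.mem_filter, hJ, Finset.mem_filter, Finset.mem_product]
      exact ⟨⟨⟨hq1, hq2⟩, by rw [h1, h2]; exact hp'⟩, Prod.ext h1 h2⟩
  rw [hfilter, Finset.sum_product]
  have hx1 : xitilde m p.1 = ∑ β ∈ Φ.filter fun β => ∑ t, β t = p.1, Stmt4.w N β :=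
    Stmt4.xitilde_eq m s p.1 (by omega)
  have hx2 : xitilde m p.2 = ∑ γ ∈ Φ.filter fun γ => ∑ t, γ t = p.2, Stmt4.w N γ :=
    Stmt4.xitilde_eq m s p.2 (by omega)
  rw [hx1, hx2, Finset.sum_mul_sum, Finset.smul_sum]
  refine Finset.sum_congr rfl fun β hβ => ?_
  rw [Finset.smul_sum]
  refine Finset.sum_congr rfl fun γ hγ => ?_
  have hβ' := (Finset.mem_filter.mp hβ).2
  have hγ' := (Finset.mem_filter.mp hγ).2
  rw [hβ', hγ']
end

section
/- For every integer m ≥ 1, the family of products ξ̃_{i_1} ξ̃_{i_2} ⋯ ξ̃_{i_k} in Λ, indexed by all k ≥ 0 and all sequences 0 ≤ i_1 < i_2 < … < i_k with i_{α+1} − i_α ≥ 2m for all α (the empty product 1 included), is ℂ-linearly independent. -/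
/-- A finite set of indices is admissible if any two distinct elements differ by at
least `2m`; these index the products `ξ̃_{i_1}⋯ξ̃_{i_k}` with `i_{α+1} - i_α ≥ 2m`. -/
def Adm (m : ℕ) (S : Finset ℕ) : Prop :=
  ∀ a ∈ S, ∀ b ∈ S, a ≠ b → (2 * m : ℤ) ≤ |(a : ℤ) - (b : ℤ)|

open Finset

theorem linearIndependent_of_triangular {ι R M κ : Type*} [Ring R] [AddCommGroup M]
    [Module R M] [LinearOrder κ] {v : ι → M} (w : ι → κ) (φ : ι → M →ₗ[R] R)
    (hdiag : ∀ i, φ i (v i) = 1) (hoff : ∀ i j, i ≠ j → w i ≤ w j → φ i (v j) = 0) :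
    LinearIndependent R v := by
  rw [linearIndependent_iff]
  intro l hl
  by_contra hne
  obtain ⟨i, hi, hmin⟩ :=
    l.support.exists_min_image w (Finsupp.support_nonempty_iff.mpr hne)
  have h := congrArg (φ i) hl
  rw [Finsupp.linearCombination_apply, Finsupp.sum, map_sum, map_zero,
    sum_eq_single_of_mem i hi fun j hj hji => by
      rw [map_smul, hoff i j hji.symm (hmin j hj), smul_zero],
    map_smul, hdiag, smul_eq_mul, mul_one] at h
  exact Finsupp.mem_support_iff.mp hi h

theorem List.prod_ofFn_sum {A κ : Type*} [Semiring A] {k : ℕ} (t : Fin k → Finset κ)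
    (f : κ → A) :
    (List.ofFn fun α => ∑ b ∈ t α, f b).prod
      = ∑ β ∈ Fintype.piFinset t, (List.ofFn fun α => f (β α)).prod := by
  induction k with
  | zero => simp
  | succ k ih =>
    have hpi : Fintype.piFinset t = (t 0 ×ˢ Fintype.piFinset (Fin.tail t)).map
        (Fin.consEquiv fun _ => κ).toEmbedding := by
      simpa using filter_piFinset_eq_map_consEquiv t fun _ => True
    rw [hpi, sum_map, sum_product, List.ofFn_succ, List.prod_cons, ih, sum_mul_sum]
    simp [List.ofFn_succ]
    rfl

section WedgeCoefficient

variable {R ι : Type*} [CommRing R]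

variable (R) in
noncomputable def basisWedge (Y : List ι) : ExteriorAlgebra R (ι →₀ R) :=
  (Y.map fun y => ExteriorAlgebra.ι R (Finsupp.single y 1)).prod

theorem basisWedge_flatMap {κ : Type*} (l : List κ) (f : κ → List ι) :
    basisWedge R (l.flatMap f) = (l.map fun a => basisWedge R (f a)).prod := by
  simp [basisWedge, List.flatMap_def, List.prod_flatten, Function.comp_def]

theorem basisWedge_ofFn {k : ℕ} (v : Fin k → ι) :
    basisWedge R (List.ofFn v) = ExteriorAlgebra.ιMulti R k fun a => Finsupp.single (v a) 1 := by
  rw [ExteriorAlgebra.ιMulti_apply, basisWedge, List.map_ofFn]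
  rfl

/-- On a wedge of `X.length` vectors this is the determinant of their coordinates at the
entries of `X`, so for `X` without repetitions it reads off the coefficient of `basisWedge R X`. -/
noncomputable def wedgeCoeff (X : List ι) : ExteriorAlgebra R (ι →₀ R) →ₗ[R] R :=
  ExteriorAlgebra.liftAlternating fun k =>
    if h : k = X.length then
      (Matrix.detRowAlternating.compLinearMap
        (LinearMap.pi fun a => Finsupp.lapply (X.get a))).domDomCongr (finCongr h.symm)
    else 0

theorem wedgeCoeff_basisWedge_ofFn (X : List ι) (v : Fin X.length → ι) :
    wedgeCoeff X (basisWedge R (List.ofFn v))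
      = (Matrix.of fun b a => Finsupp.single (v b) (1 : R) (X.get a)).det := by
  rw [basisWedge_ofFn, wedgeCoeff, ExteriorAlgebra.liftAlternating_apply_ιMulti, dif_pos rfl]
  rfl

theorem wedgeCoeff_basisWedge_of_length_ne {X Y : List ι} (h : Y.length ≠ X.length) :
    wedgeCoeff X (basisWedge R Y) = 0 := by
  rw [← List.ofFn_get Y, basisWedge_ofFn, wedgeCoeff,
    ExteriorAlgebra.liftAlternating_apply_ιMulti, dif_neg h]
  rfl

theorem List.Perm.of_wedgeCoeff_basisWedge_ne_zero {X Y : List ι}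
    (h : wedgeCoeff X (basisWedge R Y) ≠ 0) : Y.Perm X := by
  classical
  have hlen : Y.length = X.length :=
    by_contra fun hne => h (wedgeCoeff_basisWedge_of_length_ne hne)
  obtain ⟨v, rfl⟩ : ∃ v : Fin X.length → ι, Y = List.ofFn v :=
    ⟨fun b => Y.get (b.cast hlen.symm), List.ext_get (by simp [hlen]) fun _ _ _ => by simp⟩
  rw [wedgeCoeff_basisWedge_ofFn] at h
  by_contra hperm
  by_cases hv : Function.Injective v
  · obtain ⟨b, hb⟩ : ∃ b, v b ∉ X := by
      by_contra! hsub
      refine hperm (((List.nodup_ofFn.mpr hv).subperm fun y hy => ?_).perm_of_length_le hlen.ge)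
      obtain ⟨b, rfl⟩ := List.mem_ofFn.mp hy
      exact hsub b
    refine h (Matrix.det_eq_zero_of_row_eq_zero b fun a => ?_)
    exact Finsupp.single_eq_of_ne fun hab => hb (hab ▸ List.get_mem X a)
  · obtain ⟨b, b', hvb, hbb'⟩ := Function.not_injective_iff.mp hv
    exact h (Matrix.det_zero_of_row_eq hbb' (funext fun a => by simp [hvb]))

theorem wedgeCoeff_basisWedge_self {X : List ι} (hX : X.Nodup) :
    wedgeCoeff X (basisWedge R X) = 1 := by
  classical
  have hid : (Matrix.of fun b a => Finsupp.single (X.get b) (1 : R) (X.get a)) = 1 := by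
    ext b a
    simp [Finsupp.single_apply, Matrix.one_apply, hX.getElem_inj_iff, Fin.ext_iff]
  rw [← congrArg (basisWedge R) (List.ofFn_get X), wedgeCoeff_basisWedge_ofFn, hid,
    Matrix.det_one]

end WedgeCoefficient

theorem Nat.sum_range_add_div {n : ℕ} (hn : 0 < n) (i : ℕ) :
    ∑ s ∈ range n, (i + s) / n = i := by
  induction i with
  | zero => simpa using sum_eq_zero fun s hs => Nat.div_eq_of_lt (mem_range.mp hs)
  | succ i ih =>
    have h := sum_range_succ' (fun s => (i + s) / n) n
    rw [sum_range_succ, ih, Nat.add_div_right _ hn, add_zero] at h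
    simp_rw [add_right_comm i 1, add_assoc i]
    omega

/-- By `Nat.sum_range_add_div` (Hermite's identity) these `n` parts, which differ by at most
one, add up to `i`. -/
def balancedComposition (n i : ℕ) (s : Fin n) : ℕ := (i + s) / n

theorem sum_balancedComposition {n : ℕ} (hn : 0 < n) (i : ℕ) :
    ∑ s, balancedComposition n i s = i :=
  (Fin.sum_univ_eq_sum_range (fun s => (i + s) / n) n).trans (Nat.sum_range_add_div hn i)

theorem balancedComposition_mono {n : ℕ} (s : Fin n) : Monotone (balancedComposition n · s) :=
  fun _ _ h => Nat.div_le_div_right (Nat.add_le_add_right h _)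

theorem balancedComposition_lt {n i j : ℕ} (s : Fin n) (h : i + n ≤ j) :
    balancedComposition n i s < balancedComposition n j s := by
  have hn : 0 < n := s.pos
  calc (i + s) / n < (i + s) / n + 1 := Nat.lt_succ_self _
    _ = (i + s + n) / n := (Nat.add_div_right _ hn).symm
    _ ≤ (j + s) / n := Nat.div_le_div_right (by omega)

theorem Multiset.sum_map_two_pow_lt {s : Multiset ℕ} (hs : s.Nodup) {M : ℕ}
    (h : ∀ x ∈ s, x < M) : (s.map (2 ^ ·)).sum < 2 ^ M :=
  Nat.geomSum_lt (s := ⟨s, hs⟩) le_rfl h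

def tupleGraph {n : ℕ} (b : Fin n → ℕ) : List (Fin n × ℕ) := List.ofFn fun s => (s, b s)

def tupleGraphs {n : ℕ} (B : Multiset (Fin n → ℕ)) : Multiset (Fin n × ℕ) :=
  B.bind fun b => tupleGraph b

theorem tupleGraphs_cons {n : ℕ} (b : Fin n → ℕ) (B : Multiset (Fin n → ℕ)) :
    tupleGraphs (b ::ₘ B) = tupleGraph b + tupleGraphs B :=
  Multiset.cons_bind _ _ _

theorem exists_mem_eq_of_tupleGraphs_eq {n : ℕ} {B C : Multiset (Fin n → ℕ)}
    (h : tupleGraphs B = tupleGraphs C) {b : Fin n → ℕ} (hb : b ∈ B) (s : Fin n) :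
    ∃ c ∈ C, b s = c s := by
  have hmem : (s, b s) ∈ tupleGraphs B := Multiset.mem_bind.mpr ⟨b, hb, by simp [tupleGraph]⟩
  rw [h, tupleGraphs, Multiset.mem_bind] at hmem
  obtain ⟨c, hc, hsc⟩ := hmem
  exact ⟨c, hc, by simpa [tupleGraph, eq_comm] using hsc⟩

/-- Every tuple `b` of `B` is bounded by `c (max S)`, so `∑ s, b s ≤ max S`. Either one of
them reaches it, and is then `c (max S)` itself and can be peeled off, or all these sums are
smaller and, being distinct, contribute less than `2 ^ max S`. -/
theorem sum_two_pow_le_of_tupleGraphs_eq {n : ℕ} {c : ℕ → Fin n → ℕ}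
    (hmono : ∀ s, Monotone (c · s)) (hsum : ∀ i, ∑ s, c i s = i) (S : Finset ℕ)
    (B : Multiset (Fin n → ℕ)) (hB : (B.map fun b => ∑ s, b s).Nodup)
    (h : tupleGraphs B = tupleGraphs (S.val.map c)) :
    (B.map fun b => 2 ^ ∑ s, b s).sum ≤ ∑ i ∈ S, 2 ^ i ∧
      ((B.map fun b => 2 ^ ∑ s, b s).sum = ∑ i ∈ S, 2 ^ i → B = S.val.map c) := by
  induction S using Finset.induction_on_max generalizing B with
  | empty =>
    obtain ⟨s⟩ : Nonempty (Fin n) := by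
      by_contra hn
      simpa [not_nonempty_iff.mp hn] using hsum 1
    have hB0 : B = 0 := Multiset.eq_zero_of_forall_notMem fun b hb => by
      simpa using exists_mem_eq_of_tupleGraphs_eq h hb s
    simp [hB0]
  | insert M S hlt ih =>
    have hM : M ∉ S := fun h => (hlt M h).false
    have hval : (insert M S).val.map c = c M ::ₘ S.val.map c := by
      rw [Finset.insert_val_of_notMem hM, Multiset.map_cons]
    have hle : ∀ b ∈ B, ∀ s, b s ≤ c M s := fun b hb s => by
      obtain ⟨_, hc, hbc⟩ := exists_mem_eq_of_tupleGraphs_eq h hb s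
      obtain ⟨i, hi, rfl⟩ := Multiset.mem_map.mp hc
      rw [hbc]
      exact hmono s (by rcases mem_insert.mp hi with rfl | hi; exacts [le_rfl, (hlt i hi).le])
    have hsum_insert : ∑ i ∈ insert M S, 2 ^ i = 2 ^ M + ∑ i ∈ S, 2 ^ i := sum_insert hM
    by_cases htop : ∃ b ∈ B, ∑ s, b s = M
    · obtain ⟨b, hb, hbM⟩ := htop
      have hbc : b = c M := funext fun s =>
        (sum_eq_sum_iff_of_le fun s _ => hle b hb s).mp (by rw [hbM, hsum]) s (mem_univ s)
      obtain ⟨B, rfl⟩ : ∃ B', B = b ::ₘ B' := ⟨B.erase b, (Multiset.cons_erase hb).symm⟩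
      subst hbc
      rw [hval, tupleGraphs_cons, tupleGraphs_cons, add_right_inj] at h
      rw [Multiset.map_cons] at hB
      obtain ⟨hle', heq'⟩ := ih B (Multiset.nodup_cons.mp hB).2 h
      rw [Multiset.map_cons, Multiset.sum_cons, hsum M, hsum_insert, hval]
      exact ⟨by omega, fun he => by rw [heq' (by omega)]⟩
    · push Not at htop
      have hlow := Multiset.sum_map_two_pow_lt hB fun _ hx => by
        obtain ⟨b, hb, rfl⟩ := Multiset.mem_map.mp hx
        exact lt_of_le_of_ne ((sum_le_sum fun s _ => hle b hb s).trans (hsum M).le) (htop b hb)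
      rw [Multiset.map_map, Function.comp_def] at hlow
      omega

theorem eq_of_coe_ofFn_eq {α β : Type*} {k : ℕ} {f g : Fin k → α} (w : α → β)
    (hg : Function.Injective (w ∘ g)) (hw : w ∘ f = w ∘ g)
    (h : (List.ofFn f : Multiset α) = List.ofFn g) : f = g := by
  funext a
  have hmem : f a ∈ (List.ofFn g : Multiset α) :=
    h ▸ Multiset.mem_coe.mpr (List.mem_ofFn.mpr ⟨a, rfl⟩)
  obtain ⟨b, hb⟩ := List.mem_ofFn.mp (Multiset.mem_coe.mp hmem)
  have hba : b = a := hg (by simpa [hb] using congrFun hw a)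
  rw [← hb, hba]

theorem xitilde_eq_sum (m n : ℕ) :
    xitilde m n = ∑ b ∈ Nat.antidiagonalTuple (2 * m) n, basisWedge ℂ (tupleGraph b) := by
  rw [xitilde]
  refine sum_congr ?_ fun b _ => ?_
  · ext b
    simp only [mem_filter, Fintype.mem_piFinset, mem_range, Nat.mem_antidiagonalTuple,
      and_iff_right_iff_imp]
    rintro rfl s
    exact Nat.lt_succ_of_le (single_le_sum (fun _ _ => Nat.zero_le _) (mem_univ s))
  · rw [basisWedge, tupleGraph, List.map_ofFn, List.ofFn_eq_map]
    rfl

theorem prod_map_xitilde (m : ℕ) (L : List ℕ) :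
    (L.map (xitilde m)).prod = ∑ β ∈ Fintype.piFinset fun α : Fin L.length =>
        Nat.antidiagonalTuple (2 * m) L[α],
      basisWedge ℂ ((List.ofFn β).flatMap tupleGraph) := by
  rw [← List.ofFn_getElem_eq_map]
  simp only [xitilde_eq_sum, List.prod_ofFn_sum, basisWedge_flatMap, List.map_ofFn]
  rfl

theorem Adm.add_le {m : ℕ} {S : Finset ℕ} (hS : Adm m S) {a b : ℕ} (ha : a ∈ S) (hb : b ∈ S)
    (hab : a < b) : a + 2 * m ≤ b := by
  have h := hS a ha b hb hab.ne
  rw [abs_of_nonpos (by omega), neg_sub] at h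
  omega

def canonicalList (m : ℕ) (S : Finset ℕ) : List (Fin (2 * m) × ℕ) :=
  (S.sort (· ≤ ·)).flatMap fun i => tupleGraph (balancedComposition (2 * m) i)

theorem nodup_canonicalList {m : ℕ} {S : Finset ℕ} (hS : Adm m S) :
    (canonicalList m S).Nodup := by
  refine List.nodup_flatMap.mpr
    ⟨fun i _ => List.nodup_ofFn.mpr fun s t h => congrArg Prod.fst h, ?_⟩
  refine S.sortedLT_sort.pairwise.imp_of_mem fun {i j} hi hj hij p hpi hpj => ?_
  obtain ⟨s, rfl⟩ := List.mem_ofFn.mp hpi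
  obtain ⟨t, hts⟩ := List.mem_ofFn.mp hpj
  obtain ⟨rfl, h⟩ := Prod.ext_iff.mp hts
  exact (balancedComposition_lt _
    (hS.add_le ((S.mem_sort _).mp hi) ((S.mem_sort _).mp hj) hij)).ne' h

theorem sum_two_pow_le_of_wedgeCoeff_ne_zero {m : ℕ} (hm : 0 < m) {S T : Finset ℕ}
    {β : Fin (T.sort (· ≤ ·)).length → Fin (2 * m) → ℕ}
    (hβ : β ∈ Fintype.piFinset fun α => Nat.antidiagonalTuple (2 * m) (T.sort (· ≤ ·))[α])
    (h : wedgeCoeff (canonicalList m S) (basisWedge ℂ ((List.ofFn β).flatMap tupleGraph)) ≠ 0) :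
    ∑ i ∈ T, 2 ^ i ≤ ∑ i ∈ S, 2 ^ i ∧ (∑ i ∈ T, 2 ^ i = ∑ i ∈ S, 2 ^ i →
      T = S ∧ (↑(List.ofFn β) : Multiset (Fin (2 * m) → ℕ))
        = S.val.map (balancedComposition (2 * m))) := by
  have hweight : (↑(List.ofFn β) : Multiset (Fin (2 * m) → ℕ)).map (fun b => ∑ s, b s)
      = T.val := by
    rw [Multiset.map_coe, List.map_ofFn, ← T.sort_eq (· ≤ ·)]
    congr 1
    exact List.ext_get (by simp) fun α _ hα => by
      simpa using Nat.mem_antidiagonalTuple.mp (Fintype.mem_piFinset.mp hβ ⟨α, hα⟩)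
  have hgraphs : tupleGraphs (↑(List.ofFn β) : Multiset (Fin (2 * m) → ℕ))
      = tupleGraphs (S.val.map (balancedComposition (2 * m))) := by
    rw [tupleGraphs, tupleGraphs, Multiset.bind_map, Multiset.coe_bind, ← S.sort_eq (· ≤ ·),
      Multiset.coe_bind]
    exact Multiset.coe_eq_coe.mpr (List.Perm.of_wedgeCoeff_basisWedge_ne_zero h)
  have hkey := sum_two_pow_le_of_tupleGraphs_eq balancedComposition_mono
    (sum_balancedComposition (by omega)) S _ (hweight ▸ T.nodup) hgraphs
  have hsumT : ((↑(List.ofFn β) : Multiset (Fin (2 * m) → ℕ)).map fun b => 2 ^ ∑ s, b s).sum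
      = ∑ i ∈ T, 2 ^ i := by
    rw [sum_eq_multiset_sum, ← hweight, Multiset.map_map]
    rfl
  rw [hsumT] at hkey
  refine ⟨hkey.1, fun heq => ⟨Finset.val_injective ?_, hkey.2 heq⟩⟩
  rw [← hweight, hkey.2 heq, Multiset.map_map]
  simp [sum_balancedComposition (by omega : 0 < 2 * m)]

theorem wedgeCoeff_canonicalList_prod_xitilde_self {m : ℕ} (hm : 0 < m) {S : Finset ℕ}
    (hS : Adm m S) :
    wedgeCoeff (canonicalList m S) ((S.sort (· ≤ ·)).map (xitilde m)).prod = 1 := by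
  set L := S.sort (· ≤ ·)
  set β₀ : Fin L.length → Fin (2 * m) → ℕ := fun α => balancedComposition (2 * m) L[α]
  have hβ₀ : β₀ ∈ Fintype.piFinset fun α => Nat.antidiagonalTuple (2 * m) L[α] :=
    Fintype.mem_piFinset.mpr fun α =>
      Nat.mem_antidiagonalTuple.mpr (sum_balancedComposition (by omega) _)
  have hβ₀L : List.ofFn β₀ = L.map (balancedComposition (2 * m)) :=
    List.ofFn_getElem_eq_map L _
  rw [prod_map_xitilde, map_sum, sum_eq_single_of_mem β₀ hβ₀]
  · rw [hβ₀L, List.flatMap_map]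
    exact wedgeCoeff_basisWedge_self (nodup_canonicalList hS)
  intro β hβ hne
  by_contra h
  have hweight : (fun b => ∑ s, b s) ∘ β₀ = L.get :=
    funext fun α => sum_balancedComposition (by omega) _
  refine hne (eq_of_coe_ofFn_eq (fun b => ∑ s, b s) ?_ ?_ ?_)
  · exact hweight ▸ S.sortedLT_sort.strictMono_get.injective
  · exact hweight ▸ funext fun α => Nat.mem_antidiagonalTuple.mp (Fintype.mem_piFinset.mp hβ α)
  · rw [((sum_two_pow_le_of_wedgeCoeff_ne_zero hm hβ h).2 rfl).2, hβ₀L, ← S.sort_eq (· ≤ ·),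
      Multiset.map_coe]

theorem wedgeCoeff_canonicalList_prod_xitilde_eq_zero {m : ℕ} (hm : 0 < m) {S T : Finset ℕ}
    (hST : S ≠ T) (hle : ∑ i ∈ S, 2 ^ i ≤ ∑ i ∈ T, 2 ^ i) :
    wedgeCoeff (canonicalList m S) ((T.sort (· ≤ ·)).map (xitilde m)).prod = 0 := by
  rw [prod_map_xitilde, map_sum]
  refine sum_eq_zero fun β hβ => by_contra fun h => hST ?_
  obtain ⟨hle', heq⟩ := sum_two_pow_le_of_wedgeCoeff_ne_zero hm hβ h
  exact (heq (le_antisymm hle' hle)).1.symm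

/-- The products `ξ̃_{i_1} ξ̃_{i_2} ⋯ ξ̃_{i_k}` over admissible increasing sequences
(with gaps at least `2m`) are ℂ-linearly independent. -/
theorem statement5 (m : ℕ) (hm : 1 ≤ m) :
    LinearIndependent ℂ
      (fun S : {S : Finset ℕ // Adm m S} =>
        ((S.1.sort (· ≤ ·)).map (xitilde m)).prod) :=
  linearIndependent_of_triangular (fun S => ∑ i ∈ S.1, 2 ^ i)
    (fun S => wedgeCoeff (canonicalList m S.1))
    (fun S => wedgeCoeff_canonicalList_prod_xitilde_self hm S.2)
    (fun _ _ hST hle => wedgeCoeff_canonicalList_prod_xitilde_eq_zero hm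
      (Subtype.coe_injective.ne hST) hle)
end

section
/- For every integer m ≥ 1 and every 0 ≤ i ≤ 2m−1, the element ξ_0 ξ_i lies in the ideal I_{(m)}; equivalently, ξ_0 ξ_i = 0 in A_{(m)} = R/I_{(m)}. -/
open MvPolynomial

/-- The coefficient of `z^s` in `(ξ(z)^{(i)})^2`:
`g_{i,s} = Σ_{a+b=s} (a)_i (b)_i ξ_a ξ_b`. -/
noncomputable def g (i s : ℕ) : MvPolynomial ℕ ℂ :=
  ∑ p ∈ Finset.HasAntidiagonal.antidiagonal s,
    ((p.1.descFactorial i * p.2.descFactorial i : ℕ) : ℂ) • (X p.1 * X p.2)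

/-- The ideal `I_{(m)}` generated by all `g_{i,s}` with `0 ≤ i ≤ m-1`, `s ≥ 0`. -/
noncomputable def Im (m : ℕ) : Ideal (MvPolynomial ℕ ℂ) :=
  Ideal.span { f | ∃ i < m, ∃ s : ℕ, f = g i s }

lemma g_mem (m i s : ℕ) (h : i < m) : g i s ∈ Im m :=
  Ideal.subset_span ⟨i, h, s, rfl⟩

lemma smul_mem_Im {m : ℕ} (c : ℂ) {x : MvPolynomial ℕ ℂ} (hx : x ∈ Im m) :
    c • x ∈ Im m := by
  rw [smul_eq_C_mul]; exact Ideal.mul_mem_left _ _ hx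

lemma of_smul_mem {m : ℕ} {c : ℂ} (hc : c ≠ 0) {x : MvPolynomial ℕ ℂ}
    (h : c • x ∈ Im m) : x ∈ Im m := by
  have h2 := smul_mem_Im (m := m) c⁻¹ h
  rwa [smul_smul, inv_mul_cancel₀ hc, one_smul] at h2

lemma aux (m s : ℕ) (hs : s < 2 * m) :
    ∀ n a : ℕ, s ≤ 2 * a + n → 2 * a ≤ s → (X a * X (s - a) : MvPolynomial ℕ ℂ) ∈ Im m := by
  intro n
  induction n using Nat.strong_induction_on with
  | _ n IH =>
    intro a hn ha
    have ham : a < m := by omega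
    have hmem : g a s ∈ Im m := g_mem m a s ham
    set f : ℕ × ℕ → MvPolynomial ℕ ℂ :=
      fun p => ((p.1.descFactorial a * p.2.descFactorial a : ℕ) : ℂ) • (X p.1 * X p.2) with hf
    set f0 : ℕ × ℕ → MvPolynomial ℕ ℂ :=
      fun p => if p = (a, s - a) ∨ p = (s - a, a) then 0 else f p with hf0def
    have hf0 : ∀ p ∈ Finset.HasAntidiagonal.antidiagonal s, f0 p ∈ Im m := by
      intro p hp
      rw [Finset.HasAntidiagonal.mem_antidiagonal] at hp
      simp only [hf0def]
      split
      · exact Submodule.zero_mem _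
      · rename_i hne
        push_neg at hne
        obtain ⟨h1, h2⟩ := hne
        rcases lt_trichotomy p.1 a with h | h | h
        · have hz : p.1.descFactorial a = 0 := Nat.descFactorial_eq_zero_iff_lt.mpr h
          simp [hf, hz]
        · exfalso; apply h1
          have : p.2 = s - a := by omega
          rw [Prod.ext_iff]; exact ⟨h, this⟩
        · rcases lt_trichotomy p.2 a with h' | h' | h' 
          · have hz : p.2.descFactorial a = 0 := Nat.descFactorial_eq_zero_iff_lt.mpr h'
            simp [hf, hz]
          · exfalso; apply h2
            have : p.1 = s - a := by omega
            rw [Prod.ext_iff]; exact ⟨this, h'⟩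
          · set b := min p.1 p.2 with hb
            have hb1 : a < b := by omega
            have hb2 : 2 * b ≤ s := by omega
            have hn' : s - 2 * b < n := by omega
            have hIH : (X b * X (s - b) : MvPolynomial ℕ ℂ) ∈ Im m :=
              IH (s - 2 * b) hn' b (by omega) hb2
            have hxy : (X p.1 * X p.2 : MvPolynomial ℕ ℂ) = X b * X (s - b) := by
              rcases le_total p.1 p.2 with hle | hle
              · have e1 : b = p.1 := by omega
                have e2 : s - b = p.2 := by omega
                rw [e2, e1]
              · have e1 : b = p.2 := by omega
                have e2 : s - b = p.1 := by omega
                rw [e2, e1, mul_comm]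
            simp only [hf]
            rw [hxy]
            exact smul_mem_Im _ hIH
    have hsum : ∑ p ∈ Finset.HasAntidiagonal.antidiagonal s, f0 p ∈ Im m := Submodule.sum_mem _ hf0
    have hg : g a s = ∑ p ∈ Finset.HasAntidiagonal.antidiagonal s, f p := rfl
    have hdiff : (∑ p ∈ Finset.HasAntidiagonal.antidiagonal s, (f p - f0 p)) ∈ Im m := by
      rw [Finset.sum_sub_distrib]
      exact sub_mem (hg ▸ hmem) hsum
    set d : ℕ := a.descFactorial a * (s - a).descFactorial a with hd
    have hne1 : a.descFactorial a ≠ 0 := by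
      simp [Nat.descFactorial_eq_zero_iff_lt]
    have hne2 : (s - a).descFactorial a ≠ 0 :=
      fun h => absurd (Nat.descFactorial_eq_zero_iff_lt.mp h) (by omega)
    have hdne : d ≠ 0 := by rw [hd]; exact Nat.mul_ne_zero hne1 hne2
    -- restrict the sum to the two special points
    set P : Finset (ℕ × ℕ) := insert (a, s - a) {(s - a, a)} with hP
    have hPsub : P ⊆ Finset.HasAntidiagonal.antidiagonal s := by
      intro p hp
      rw [Finset.HasAntidiagonal.mem_antidiagonal]
      simp only [hP, Finset.mem_insert, Finset.mem_singleton] at hp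
      rcases hp with h | h <;> subst h <;> simp <;> omega
    have hzero : ∀ p ∈ Finset.HasAntidiagonal.antidiagonal s, p ∉ P → f p - f0 p = 0 := by
      intro p _ hp
      simp only [hP, Finset.mem_insert, Finset.mem_singleton, not_or] at hp
      simp only [hf0def, if_neg (not_or.mpr hp), sub_self]
    have hres : ∑ p ∈ Finset.HasAntidiagonal.antidiagonal s, (f p - f0 p) = ∑ p ∈ P, (f p - f0 p) :=
      (Finset.sum_subset hPsub hzero).symm
    rw [hres] at hdiff
    have hfval : ∀ p ∈ P, f p - f0 p = f p := by
      intro p hp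
      simp only [hP, Finset.mem_insert, Finset.mem_singleton] at hp
      simp only [hf0def, if_pos hp, sub_zero]
    rw [Finset.sum_congr rfl hfval] at hdiff
    rcases eq_or_lt_of_le ha with heq | hlt
    · -- s = 2a, single point
      have hsa : s - a = a := by omega
      have hPone : P = {(a, a)} := by
        simp [hP, hsa]
      rw [hPone, Finset.sum_singleton] at hdiff
      simp only [hf, hsa] at hdiff ⊢
      exact of_smul_mem (by exact_mod_cast Nat.mul_ne_zero hne1 hne1) hdiff
    · -- 2a < s, two distinct points
      have hne : (a, s - a) ≠ (s - a, a) := by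
        intro h; rw [Prod.ext_iff] at h; omega
      rw [hP, Finset.sum_insert (by simpa using hne), Finset.sum_singleton] at hdiff
      have hcomb : f (a, s - a) + f (s - a, a) = (((d : ℂ)) + (d : ℂ)) • (X a * X (s - a)) := by
        simp only [hf]
        show ((a.descFactorial a * (s - a).descFactorial a : ℕ) : ℂ) • (X a * X (s - a))
            + (((s - a).descFactorial a * a.descFactorial a : ℕ) : ℂ) • (X (s - a) * X a)
            = ((d : ℂ) + (d : ℂ)) • (X a * X (s - a))
        rw [mul_comm ((s - a).descFactorial a) (a.descFactorial a),
          mul_comm (X (s - a) : MvPolynomial ℕ ℂ) (X a), ← add_smul, hd]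
      rw [hcomb] at hdiff
      refine of_smul_mem ?_ hdiff
      exact_mod_cast (show d + d ≠ 0 by omega)

/-- For `0 ≤ i ≤ 2m-1`, the element `ξ_0 ξ_i` lies in `I_{(m)}`, i.e. `ξ_0 ξ_i = 0`
in `A_{(m)} = R/I_{(m)}`. -/
theorem statement7 (m : ℕ) (hm : 1 ≤ m) (i : ℕ) (hi : i < 2 * m) :
    (X 0 * X i : MvPolynomial ℕ ℂ) ∈ Im m := by
  have := aux m i hi i 0 (by omega) (by omega)
  simpa using this
end

section
/- For every integer m ≥ 1 and every n ≥ 0, F^{(m)}_n = Σ_{k ≥ 0} C(n − (m−1)(k−1), k), where C denotes the ordinary binomial coefficient and the sum is over those k ≥ 0 with n − (m−1)(k−1) ≥ k (all other terms being interpreted as 0). -/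
lemma aux_base (p n : ℕ) (hn : n ≤ p) :
    ∑ k ∈ Finset.range (n + 1), Nat.choose (n - p * (k - 1)) k = n + 1 := by
  match n with
  | 0 => simp
  | (t+1) =>
    rw [Finset.sum_range_succ', Finset.sum_range_succ']
    have hz : ∀ k ∈ Finset.range t,
        Nat.choose (t + 1 - p * ((k + 1 + 1) - 1)) (k + 1 + 1) = 0 := by
      intro k _
      have e : t + 1 - p * ((k + 1 + 1) - 1) = 0 := by
        have h1 : (k + 1 + 1) - 1 = k + 1 := by omega
        have : p ≤ p * (k + 1) := Nat.le_mul_of_pos_right p (by omega)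
        rw [h1]; omega
      rw [e]
      exact Nat.choose_eq_zero_of_lt (by omega)
    rw [Finset.sum_congr rfl hz]
    simp

lemma aux_key (p n : ℕ) (k : ℕ) :
    Nat.choose (n + p + 1 - p * (k - 1)) k
      = Nat.choose (n + p - p * (k - 1)) k
        + (if k = 0 then 0 else Nat.choose (n - p * (k - 2)) (k - 1)) := by
  match k with
  | 0 => simp
  | (j+1) =>
    have e0 : j + 1 - 2 = j - 1 := by omega
    simp only [Nat.add_sub_cancel, if_neg (Nat.succ_ne_zero j), e0]
    rcases Nat.eq_zero_or_pos j with hj | hj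
    · subst hj
      simp [Nat.choose_one_right]
    have hpj : p * j = p * (j - 1) + p := by
      have hj1 : j = (j - 1) + 1 := by omega
      calc p * j = p * ((j - 1) + 1) := by rw [← hj1]
        _ = p * (j - 1) + p := by ring
    by_cases h : p * j ≤ n + p
    · have h1 : n + p + 1 - p * j = (n + p - p * j) + 1 := by omega
      have h2 : n + p - p * j = n - p * (j - 1) := by omega
      rw [h1, Nat.choose_succ_succ, h2, Nat.add_comm]
    · push_neg at h
      have e1 : n + p + 1 - p * j = 0 := by omega
      have e2 : n + p - p * j = 0 := by omega
      have e3 : n - p * (j - 1) = 0 := by omega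
      have c1 : Nat.choose 0 (j + 1) = 0 := Nat.choose_eq_zero_of_lt (by omega)
      have c2 : Nat.choose 0 j = 0 := Nat.choose_eq_zero_of_lt (by omega)
      rw [e1, e2, e3, c1, c2]

lemma aux_step (p n : ℕ) :
    ∑ k ∈ Finset.range (n + p + 2), Nat.choose (n + p + 1 - p * (k - 1)) k
      = (∑ k ∈ Finset.range (n + p + 1), Nat.choose (n + p - p * (k - 1)) k)
        + ∑ k ∈ Finset.range (n + 1), Nat.choose (n - p * (k - 1)) k := by
  have h := Finset.sum_congr rfl (fun k (_ : k ∈ Finset.range (n + p + 2)) => aux_key p n k)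
  rw [h, Finset.sum_add_distrib]
  congr 1
  · rw [Finset.sum_range_succ]
    have : Nat.choose (n + p - p * (n + p + 1 - 1)) (n + p + 1) = 0 :=
      Nat.choose_eq_zero_of_lt (by omega)
    rw [this, Nat.add_zero]
  · rw [Finset.sum_range_succ']
    have g0 : (if (0:ℕ) = 0 then 0 else Nat.choose (n - p * (0 - 2)) (0 - 1)) = 0 := by simp
    rw [g0, Nat.add_zero]
    have gs : ∀ x ∈ Finset.range (n + p + 1),
        (if x + 1 = 0 then 0 else Nat.choose (n - p * (x + 1 - 2)) (x + 1 - 1))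
          = Nat.choose (n - p * (x - 1)) x := by
      intro x _
      rw [if_neg (Nat.succ_ne_zero x)]
      congr 2 <;> omega
    rw [Finset.sum_congr rfl gs]
    rw [← Finset.sum_subset (Finset.range_subset_range.mpr (by omega : n + 1 ≤ n + p + 1))]
    intro j _ hj
    simp only [Finset.mem_range] at hj
    exact Nat.choose_eq_zero_of_lt (by omega)

/-- For `F^{(m)}` defined by `F^{(m)}_i = i+1` for `0 ≤ i ≤ m-1` and
`F^{(m)}_{i+m} = F^{(m)}_{i+m-1} + F^{(m)}_i`, one has
`F^{(m)}_n = Σ_{k ≥ 0} C(n - (m-1)(k-1), k)` (terms with `n - (m-1)(k-1) < k`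
being `0`; all nonzero terms have `k ≤ n`, so the sum may be truncated at `k = n`). -/
theorem statement10 (m : ℕ) (hm : 1 ≤ m) (F : ℕ → ℕ)
    (h1 : ∀ i < m, F i = i + 1)
    (h2 : ∀ i : ℕ, F (i + m) = F (i + m - 1) + F i) (n : ℕ) :
    F n = ∑ k ∈ Finset.range (n + 1), Nat.choose (n - (m - 1) * (k - 1)) k := by
  obtain ⟨p, rfl⟩ : ∃ p, m = p + 1 := ⟨m - 1, by omega⟩
  simp only [Nat.add_sub_cancel]
  induction n using Nat.strong_induction_on with
  | _ n ih =>
    by_cases hn : n < p + 1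
    · rw [h1 n hn, aux_base p n (by omega)]
    · obtain ⟨i, rfl⟩ : ∃ i, n = i + (p + 1) := ⟨n - (p + 1), by omega⟩
      have e : i + (p + 1) = i + p + 1 := by omega
      rw [h2 i]
      rw [e, Nat.add_sub_cancel] at *
      rw [ih (i + p) (by omega), ih i (by omega)]
      have : i + p + 1 + 1 = i + p + 2 := by omega
      rw [this, aux_step p i]
end

section
/- For all integers m, n ≥ 1, the following identity holds in ℤ[z,q]: Σ_{k ≥ 0} Σ_{(i_1,…,i_k)} z^k q^{i_1+⋯+i_k} = Σ_{k ≥ 0} z^k q^{m k^2} [n − (2m−1)(k−1) choose k]_q, where the inner sum on the left is over all sequences of integers m ≤ i_1 < i_2 < … < i_k ≤ n+m−1 with i_{α+1} − i_α ≥ 2m for all α (the k = 0 term being 1 on both sides). -/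
open MvPolynomial

/-- The Gaussian binomial coefficient `[a choose b]_q = Σ_{μ ⊆ ((a-b)^b)} q^{|μ|}`
(sum over partitions fitting in a `b × (a-b)` box), and `0` when `a < b`;
here `q = X 1` in `ℤ[z,q] = MvPolynomial (Fin 2) ℤ` (`z = X 0`). -/
noncomputable def gbinom (a b : ℕ) : MvPolynomial (Fin 2) ℤ :=
  if a < b then 0
  else ∑ μ ∈ (Fintype.piFinset fun _ : Fin b => Finset.range (a - b + 1)).filter
      (fun μ => ∀ i j : Fin b, i ≤ j → μ j ≤ μ i),
    (X 1 : MvPolynomial (Fin 2) ℤ) ^ (∑ i, μ i)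

private lemma gap_step {m k : ℕ} {S : Finset ℕ}
    (hgap : ∀ a ∈ S, ∀ b ∈ S, a ≠ b → (2 * m : ℤ) ≤ |(a : ℤ) - (b : ℤ)|)
    (hS : S.card = k) (β : Fin k) (d : ℕ) :
    ∀ γ : Fin k, (β : ℕ) + d = (γ : ℕ) →
      S.orderEmbOfFin hS β + 2 * m * d ≤ S.orderEmbOfFin hS γ := by
  induction d with
  | zero =>
      intro γ hd
      have : β = γ := Fin.ext (by omega)
      subst this; simp
  | succ d ih =>
      intro γ hd
      have hγ := γ.isLt
      have hlt : (β : ℕ) + d < k := by omega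
      have h1 := ih ⟨(β : ℕ) + d, hlt⟩ rfl
      have hlt2 : (⟨(β : ℕ) + d, hlt⟩ : Fin k) < γ := by
        rw [Fin.lt_def]; simp; omega
      have hmono : S.orderEmbOfFin hS ⟨(β : ℕ) + d, hlt⟩ < S.orderEmbOfFin hS γ :=
        (S.orderEmbOfFin hS).strictMono hlt2
      have hint := hgap _ (S.orderEmbOfFin_mem hS ⟨(β : ℕ) + d, hlt⟩) _
        (S.orderEmbOfFin_mem hS γ) (Nat.ne_of_lt hmono)
      have hc : ((S.orderEmbOfFin hS ⟨(β : ℕ) + d, hlt⟩ : ℕ) : ℤ)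
          < ((S.orderEmbOfFin hS γ : ℕ) : ℤ) := by exact_mod_cast hmono
      rw [abs_of_nonpos (by omega)] at hint
      have h2 : S.orderEmbOfFin hS ⟨(β : ℕ) + d, hlt⟩ + 2 * m ≤ S.orderEmbOfFin hS γ := by
        omega
      have h3 : 2 * m * (d + 1) = 2 * m * d + 2 * m := by ring
      rw [h3, ← Nat.add_assoc]
      exact le_trans (Nat.add_le_add_right h1 (2 * m)) h2

/-- lower and upper bounds for elements of a `2m`-separated subset of `Icc m (n+m-1)`. -/
private lemma lowhigh {m n k : ℕ} {S : Finset ℕ}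
    (hsub : S ⊆ Finset.Icc m (n + m - 1))
    (hgap : ∀ a ∈ S, ∀ b ∈ S, a ≠ b → (2 * m : ℤ) ≤ |(a : ℤ) - (b : ℤ)|)
    (hcard : S.card = k) (β : Fin k) :
    m + 2 * m * (β : ℕ) ≤ S.orderEmbOfFin hcard β ∧
      S.orderEmbOfFin hcard β + 2 * m * ((k - 1) - (β : ℕ)) ≤ n + m - 1 := by
  have hk := β.isLt
  have h0 : (0 : ℕ) < k := by omega
  have hlow := gap_step hgap hcard ⟨0, h0⟩ (β : ℕ) β (by simp)
  have hm : m ≤ S.orderEmbOfFin hcard ⟨0, h0⟩ :=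
    (Finset.mem_Icc.mp (hsub (S.orderEmbOfFin_mem hcard ⟨0, h0⟩))).1
  have hl : k - 1 < k := by omega
  have hhigh := gap_step hgap hcard β ((k - 1) - (β : ℕ)) ⟨k - 1, hl⟩ (by simp; omega)
  have hM : S.orderEmbOfFin hcard ⟨k - 1, hl⟩ ≤ n + m - 1 :=
    (Finset.mem_Icc.mp (hsub (S.orderEmbOfFin_mem hcard ⟨k - 1, hl⟩))).2
  exact ⟨by omega, by omega⟩

/-- `Σ_k Σ_{m ≤ i_1 < ⋯ < i_k ≤ n+m-1, i_{α+1}-i_α ≥ 2m} z^k q^{i_1+⋯+i_k}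
 = Σ_k z^k q^{m k²} [n - (2m-1)(k-1) choose k]_q` in `ℤ[z,q]`. -/
theorem statement13 (m n : ℕ) (hm : 1 ≤ m) (hn : 1 ≤ n) :
    ∑ S ∈ (Finset.Icc m (n + m - 1)).powerset.filter
        (fun S => ∀ a : ℕ, a ∈ S → ∀ b : ℕ, b ∈ S → a ≠ b →
          (2 * m : ℤ) ≤ |(a : ℤ) - (b : ℤ)|),
      (X 0 : MvPolynomial (Fin 2) ℤ) ^ S.card * (X 1) ^ (∑ i ∈ S, i) =
    ∑ k ∈ Finset.range (n + 1),
      (X 0 : MvPolynomial (Fin 2) ℤ) ^ k * (X 1) ^ (m * k ^ 2) *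
        gbinom (n - (2 * m - 1) * (k - 1)) k := by
  have hmaps : ∀ S ∈ (Finset.Icc m (n + m - 1)).powerset.filter
      (fun S => ∀ a : ℕ, a ∈ S → ∀ b : ℕ, b ∈ S → a ≠ b →
        (2 * m : ℤ) ≤ |(a : ℤ) - (b : ℤ)|), S.card ∈ Finset.range (n + 1) := by
    intro S hS
    rw [Finset.mem_range]
    have hsub : S ⊆ Finset.Icc m (n + m - 1) :=
      Finset.mem_powerset.mp (Finset.mem_filter.mp hS).1
    have := Finset.card_le_card hsub
    rw [Nat.card_Icc] at this
    omega
  rw [← Finset.sum_fiberwise_of_maps_to hmaps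
    (fun S => (X 0 : MvPolynomial (Fin 2) ℤ) ^ S.card * (X 1) ^ (∑ i ∈ S, i))]
  apply Finset.sum_congr rfl
  intro k _
  have h2m : 2 * m * (k - 1) = (2 * m - 1) * (k - 1) + (k - 1) := by
    have hbig : 1 * (k - 1) ≤ 2 * m * (k - 1) := Nat.mul_le_mul_right _ (by omega)
    rw [Nat.sub_one_mul]
    omega
  by_cases hak : k ≤ n - (2 * m - 1) * (k - 1)
  · -- bijection case
    rw [gbinom, if_neg (by omega), Finset.mul_sum]
    refine Finset.sum_nbij'
      (fun S α => (if h : S.card = k then S.orderEmbOfFin h α.rev else 0)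
        - (m + 2 * m * (α.rev : ℕ)))
      (fun μ => Finset.image (fun β : Fin k => μ β.rev + m + 2 * m * (β : ℕ)) Finset.univ)
      ?_ ?_ ?_ ?_ ?_
    · -- forward map lands in partitions
      intro S hS
      rw [Finset.mem_filter] at hS
      obtain ⟨hSF, hcard⟩ := hS
      rw [Finset.mem_filter, Finset.mem_powerset] at hSF
      obtain ⟨hsub, hgap⟩ := hSF
      simp only [dif_pos hcard]
      rw [Finset.mem_filter, Fintype.mem_piFinset]
      refine ⟨fun α => ?_, fun i j hij => ?_⟩
      · try dsimp only
        rw [Finset.mem_range]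
        have hk := α.rev.isLt
        obtain ⟨hA, hB⟩ := lowhigh hsub hgap hcard α.rev
        have hXY : 2 * m * (α.rev : ℕ) + 2 * m * ((k - 1) - (α.rev : ℕ))
            = 2 * m * (k - 1) := by
          rw [← Nat.mul_add]
          congr 1
          omega
        omega
      · try dsimp only
        have hle : (j.rev : ℕ) ≤ (i.rev : ℕ) := Fin.rev_le_rev.mpr hij
        have hstep := gap_step hgap hcard j.rev ((i.rev : ℕ) - (j.rev : ℕ)) i.rev (by omega)
        obtain ⟨hA', -⟩ := lowhigh hsub hgap hcard j.rev
        obtain ⟨hA, -⟩ := lowhigh hsub hgap hcard i.rev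
        have hXY : 2 * m * (j.rev : ℕ) + 2 * m * ((i.rev : ℕ) - (j.rev : ℕ))
            = 2 * m * (i.rev : ℕ) := by
          rw [← Nat.mul_add]
          congr 1
          omega
        omega
    · -- backward map lands in subsets
      intro μ hμ
      rw [Finset.mem_filter, Fintype.mem_piFinset] at hμ
      obtain ⟨hval, hanti⟩ := hμ
      have hval' : ∀ α : Fin k, μ α < n - (2 * m - 1) * (k - 1) - k + 1 := by
        intro α
        have := hval α
        rwa [Finset.mem_range] at this
      have hstep : ∀ β γ : Fin k, β < γ →
          μ β.rev + m + 2 * m * (β : ℕ) + 2 * m ≤ μ γ.rev + m + 2 * m * (γ : ℕ) := by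
        intro β γ hβγ
        have h1 : μ β.rev ≤ μ γ.rev := hanti γ.rev β.rev (Fin.rev_le_rev.mpr (le_of_lt hβγ))
        have h2 : 2 * m * ((β : ℕ) + 1) ≤ 2 * m * (γ : ℕ) :=
          Nat.mul_le_mul_left _ (by exact_mod_cast hβγ)
        have h3 : 2 * m * ((β : ℕ) + 1) = 2 * m * (β : ℕ) + 2 * m := by ring
        omega
      have hmono : StrictMono (fun β : Fin k => μ β.rev + m + 2 * m * (β : ℕ)) := by
        intro β γ hβγ
        have := hstep β γ hβγ
        simp only
        omega
      rw [Finset.mem_filter]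
      constructor
      · rw [Finset.mem_filter, Finset.mem_powerset]
        constructor
        · intro x hx
          rw [Finset.mem_image] at hx
          obtain ⟨β, -, rfl⟩ := hx
          rw [Finset.mem_Icc]
          have hβ := β.isLt
          have hv := hval' β.rev
          have hX : 2 * m * (β : ℕ) ≤ 2 * m * (k - 1) :=
            Nat.mul_le_mul_left _ (by omega)
          exact ⟨by omega, by omega⟩
        · intro x hx y hy hxy
          rw [Finset.mem_image] at hx hy
          obtain ⟨β, -, rfl⟩ := hx
          obtain ⟨γ, -, rfl⟩ := hy
          have hne : β ≠ γ := by
            intro h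
            exact hxy (by rw [h])
          try dsimp only
          rcases lt_or_gt_of_ne hne with h | h
          · have hh := hstep β γ h
            rw [abs_of_nonpos (by omega)]
            omega
          · have hh := hstep γ β h
            rw [abs_of_nonneg (by omega)]
            omega
      · rw [Finset.card_image_of_injective _ hmono.injective, Finset.card_univ,
          Fintype.card_fin]
    · -- left inverse
      intro S hS
      rw [Finset.mem_filter] at hS
      obtain ⟨hSF, hcard⟩ := hS
      rw [Finset.mem_filter, Finset.mem_powerset] at hSF
      obtain ⟨hsub, hgap⟩ := hSF
      simp only [dif_pos hcard, Fin.rev_rev]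
      have hfun : (fun β : Fin k =>
          S.orderEmbOfFin hcard β - (m + 2 * m * (β : ℕ)) + m + 2 * m * (β : ℕ))
          = fun β : Fin k => S.orderEmbOfFin hcard β := by
        funext β
        obtain ⟨hA, -⟩ := lowhigh hsub hgap hcard β
        omega
      rw [hfun]
      apply Finset.coe_injective
      rw [Finset.coe_image, Finset.coe_univ, Set.image_univ]
      exact S.range_orderEmbOfFin hcard
    · -- right inverse
      intro μ hμ
      rw [Finset.mem_filter, Fintype.mem_piFinset] at hμ
      obtain ⟨hval, hanti⟩ := hμ
      have hstep : ∀ β γ : Fin k, β < γ →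
          μ β.rev + m + 2 * m * (β : ℕ) + 2 * m ≤ μ γ.rev + m + 2 * m * (γ : ℕ) := by
        intro β γ hβγ
        have h1 : μ β.rev ≤ μ γ.rev := hanti γ.rev β.rev (Fin.rev_le_rev.mpr (le_of_lt hβγ))
        have h2 : 2 * m * ((β : ℕ) + 1) ≤ 2 * m * (γ : ℕ) :=
          Nat.mul_le_mul_left _ (by exact_mod_cast hβγ)
        have h3 : 2 * m * ((β : ℕ) + 1) = 2 * m * (β : ℕ) + 2 * m := by ring
        omega
      have hmono : StrictMono (fun β : Fin k => μ β.rev + m + 2 * m * (β : ℕ)) := by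
        intro β γ hβγ
        have := hstep β γ hβγ
        simp only
        omega
      have hcard' : (Finset.image (fun β : Fin k => μ β.rev + m + 2 * m * (β : ℕ))
          Finset.univ).card = k := by
        rw [Finset.card_image_of_injective _ hmono.injective, Finset.card_univ,
          Fintype.card_fin]
      funext α
      try dsimp only
      rw [dif_pos hcard']
      have hemb : (fun β : Fin k => μ β.rev + m + 2 * m * (β : ℕ))
          = ⇑((Finset.image (fun β : Fin k => μ β.rev + m + 2 * m * (β : ℕ))
              Finset.univ).orderEmbOfFin hcard') :=
        Finset.orderEmbOfFin_unique hcard'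
          (fun x => Finset.mem_image_of_mem _ (Finset.mem_univ x)) hmono
      simp only [← hemb, Fin.rev_rev]
      omega
    · -- values agree
      intro S hS
      rw [Finset.mem_filter] at hS
      obtain ⟨hSF, hcard⟩ := hS
      rw [Finset.mem_filter, Finset.mem_powerset] at hSF
      obtain ⟨hsub, hgap⟩ := hSF
      simp only [dif_pos hcard]
      have hSim : S = Finset.image (⇑(S.orderEmbOfFin hcard)) Finset.univ := by
        apply Finset.coe_injective
        rw [Finset.coe_image, Finset.coe_univ, Set.image_univ, S.range_orderEmbOfFin hcard]
      have h1 : ∑ i ∈ S, i = ∑ β : Fin k, (S.orderEmbOfFin hcard β : ℕ) := by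
        conv_lhs => rw [hSim]
        exact Finset.sum_image (fun x _ y _ h => (S.orderEmbOfFin hcard).injective h)
      have h2 : ∑ α : Fin k,
            (S.orderEmbOfFin hcard α.rev - (m + 2 * m * (α.rev : ℕ)))
          = ∑ β : Fin k, (S.orderEmbOfFin hcard β - (m + 2 * m * (β : ℕ))) :=
        Fintype.sum_equiv Fin.revPerm _ _ (fun α => rfl)
      have h3 : ∑ β : Fin k, (S.orderEmbOfFin hcard β : ℕ)
          = (∑ β : Fin k, (S.orderEmbOfFin hcard β - (m + 2 * m * (β : ℕ))))
            + ∑ β : Fin k, (m + 2 * m * (β : ℕ)) := by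
        rw [← Finset.sum_add_distrib]
        apply Finset.sum_congr rfl
        intro β _
        obtain ⟨hA, -⟩ := lowhigh hsub hgap hcard β
        omega
      have h4 : ∑ β : Fin k, (m + 2 * m * (β : ℕ)) = m * k ^ 2 := by
        rw [Finset.sum_add_distrib, Finset.sum_const, Finset.card_univ, Fintype.card_fin,
          ← Finset.mul_sum, smul_eq_mul]
        have h5 : ∑ β : Fin k, (β : ℕ) = ∑ i ∈ Finset.range k, i :=
          Fin.sum_univ_eq_sum_range (fun i => i) k
        have h6 := Finset.sum_range_id_mul_two k
        have h7 : 2 * m * (∑ i ∈ Finset.range k, i)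
            = m * ((∑ i ∈ Finset.range k, i) * 2) := by ring
        rw [h5, h7, h6]
        cases k with
        | zero => simp
        | succ j =>
            have : j + 1 - 1 = j := rfl
            rw [this]
            ring
      have hsum : ∑ i ∈ S, i = m * k ^ 2
          + ∑ α : Fin k, (S.orderEmbOfFin hcard α.rev - (m + 2 * m * (α.rev : ℕ))) := by
        rw [h1, h3, h2, h4]
        ring
      rw [hcard, hsum, pow_add]
      ring
  · -- empty case
    have hk1 : 1 ≤ k := by
      rcases Nat.eq_zero_or_pos k with h | h
      · exfalso; apply hak; subst h; simp
      · exact h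
    have hempty : ((Finset.Icc m (n + m - 1)).powerset.filter
        (fun S => ∀ a : ℕ, a ∈ S → ∀ b : ℕ, b ∈ S → a ≠ b →
          (2 * m : ℤ) ≤ |(a : ℤ) - (b : ℤ)|)).filter (fun S => S.card = k) = ∅ := by
      rw [Finset.filter_eq_empty_iff]
      intro S hS hcard
      rw [Finset.mem_filter, Finset.mem_powerset] at hS
      obtain ⟨hsub, hgap⟩ := hS
      have h0 : (0 : ℕ) < k := hk1
      obtain ⟨hA, hB⟩ := lowhigh hsub hgap hcard ⟨0, h0⟩
      simp only [Fin.val_mk, Nat.mul_zero, Nat.sub_zero, Nat.add_zero] at hA hB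
      omega
    rw [hempty, Finset.sum_empty, gbinom, if_pos (by omega), mul_zero]
end

section
/- The unital ℂ-subalgebra of the algebra of ℂ-linear endomorphisms of Λp generated by the partial derivative operators {∂/∂p_k : k ≥ 1} equals the unital ℂ-subalgebra generated by the operators {T_n : n ≥ 1}. Moreover, for every n ≥ 1 the two subalgebras generated by {∂/∂p_1, …, ∂/∂p_n} and by {T_1, …, T_n} respectively coincide. -/
open MvPolynomial

/-- `Λp = ℂ[p_1, p_2, …]`, polynomials in variables `p_k` indexed by `k ∈ ℕ+`. -/
abbrev LambdaP : Type := MvPolynomial ℕ+ ℂ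

/-- `φ : Λp → Λp[x]`, the ℂ-algebra homomorphism with `φ(p_k) = p_k + x^k`. -/
noncomputable def phiMap : LambdaP →ₐ[ℂ] Polynomial LambdaP :=
  aeval (fun k : ℕ+ => Polynomial.C (X k) + Polynomial.X ^ (k : ℕ))

/-- `T_n(f) = n! ⋅ (coefficient of x^n in φ(f))`. -/
noncomputable def T (n : ℕ) : Module.End ℂ LambdaP :=
  (n.factorial : ℂ) •
    (((Polynomial.lcoeff LambdaP n).restrictScalars ℂ).comp phiMap.toLinearMap)

/-- The partial derivative operator `∂/∂p_k` as a ℂ-linear endomorphism of `Λp`. -/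
noncomputable def D (k : ℕ+) : Module.End ℂ LambdaP :=
  (pderiv k).toLinearMap

/-!
Write `φ f = ∑ₙ Cₙ f xⁿ`, so that `T_n = n! Cₙ` and `C₀ = id`. By the chain rule,
`d/dx (φ f) = ∑ₖ k x^(k-1) φ(∂ₖ f)`, and comparing coefficients of `x^(n-1)` gives the
triangular recursion `n Cₙ = ∑_{k ≤ n} k C_{n-k} ∂ₖ`. By induction on `n` it expresses `Cₙ`
through `∂₁, …, ∂ₙ`, and, solved for its top term `n ∂ₙ`, it expresses `∂ₙ` through
`C₁, …, Cₙ`.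
-/

theorem MvPolynomial.derivation_aeval_of_mem_supported {σ R A M : Type*} [CommSemiring R]
    [CommSemiring A] [Algebra R A] [AddCommMonoid M] [Module A M] [Module R M]
    (d : Derivation R A M) (g : σ → A) {s : Finset σ}
    {f : MvPolynomial σ R} (hf : f ∈ supported R (s : Set σ)) :
    d (aeval g f) = ∑ i ∈ s, aeval g (pderiv i f) • d (g i) := by
  classical
  rw [supported_eq_adjoin_X] at hf
  induction hf using Algebra.adjoin_induction with
  | mem x hx =>
    obtain ⟨i, hi, rfl⟩ := hx
    simp [pderiv_X, Pi.single_apply, Finset.mem_coe.mp hi]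
  | algebraMap r => simp
  | add x y _ _ hx hy => simp only [map_add, hx, hy, add_smul, Finset.sum_add_distrib]
  | mul x y _ _ hx hy =>
    simp only [map_mul, Derivation.leibniz, hx, hy, map_add, smul_eq_mul, add_smul, mul_smul,
      Finset.sum_add_distrib, Finset.smul_sum]

noncomputable def phiCoeff (n : ℕ) : Module.End ℂ LambdaP :=
  ((Polynomial.lcoeff LambdaP n).restrictScalars ℂ).comp phiMap.toLinearMap

theorem phiCoeff_apply (n : ℕ) (f : LambdaP) : phiCoeff n f = (phiMap f).coeff n := rfl

theorem T_eq_smul_phiCoeff (n : ℕ) : T n = (n.factorial : ℂ) • phiCoeff n := rfl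

theorem phiCoeff_zero : phiCoeff 0 = 1 := by
  have h : ((Polynomial.aeval (0 : LambdaP)).restrictScalars ℂ).comp phiMap = AlgHom.id ℂ _ := by
    ext k
    simp [phiMap]
  refine LinearMap.ext fun f => ?_
  simpa [phiCoeff_apply, Polynomial.coeff_zero_eq_eval_zero] using congr($h f)

theorem derivative_C_X_add_X_pow (k : ℕ+) :
    Polynomial.derivative (Polynomial.C (X k) + Polynomial.X ^ (k : ℕ) : Polynomial LambdaP) =
      (k : ℂ) • Polynomial.X ^ ((k : ℕ) - 1) := by
  simp [Polynomial.derivative_X_pow, Nat.cast_smul_eq_nsmul, nsmul_eq_mul]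

theorem derivative_phiMap {s : Finset ℕ+} {f : LambdaP} (hf : f ∈ supported ℂ (s : Set ℕ+)) :
    Polynomial.derivative (phiMap f) =
      ∑ k ∈ s, (k : ℂ) • (phiMap (pderiv k f) * Polynomial.X ^ ((k : ℕ) - 1)) := by
  have chain := derivation_aeval_of_mem_supported
    ((Polynomial.derivative' : Derivation LambdaP _ _).restrictScalars ℂ)
    (fun k : ℕ+ => Polynomial.C (X k) + Polynomial.X ^ (k : ℕ)) hf
  simp only [Derivation.coe_restrictScalars, Polynomial.derivative'_apply,
    derivative_C_X_add_X_pow, smul_eq_mul, mul_smul_comm] at chain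
  exact chain

theorem smul_phiCoeff_eq_sum (n : ℕ+) :
    (n : ℂ) • phiCoeff n = ∑ k ∈ Finset.Iic n, (k : ℂ) • (phiCoeff (n - k) * D k) := by
  obtain ⟨n, rfl⟩ : ∃ m : ℕ, m.succPNat = n := ⟨n.natPred, n.succPNat_natPred⟩
  refine LinearMap.ext fun f => ?_
  have hf : f ∈ supported ℂ (↑(f.vars ∪ Finset.Iic n.succPNat) : Set ℕ+) :=
    supported_mono (by simp) (mem_supported_vars f)
  have hcoeff := congr(Polynomial.coeff $(derivative_phiMap hf) n)
  simp only [Polynomial.coeff_derivative, Polynomial.finsetSum_coeff, Polynomial.coeff_smul,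
    Polynomial.coeff_mul_X_pow'] at hcoeff
  rw [← Finset.sum_subset Finset.subset_union_right fun k _ hk => ?_] at hcoeff
  · have hn : ((n + 1 : ℕ) : ℂ) • (phiMap f).coeff (n + 1) =
        (phiMap f).coeff (n + 1) * (n + 1) := by
      rw [Nat.cast_smul_eq_nsmul, nsmul_eq_mul, mul_comm, Nat.cast_add_one]
    simp only [LinearMap.smul_apply, LinearMap.sum_apply, Module.End.mul_apply,
      phiCoeff_apply, D, Derivation.coeFn_coe, Nat.succPNat_coe, Nat.succ_eq_add_one, hn, hcoeff]
    refine Finset.sum_congr rfl fun k hk => ?_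
    have hk : (k : ℕ) ≤ n + 1 := by simpa [← PNat.coe_le_coe] using hk
    rw [if_pos (by omega), show n - ((k : ℕ) - 1) = n + 1 - k by have := k.pos; omega]
  · have hk : n + 1 < (k : ℕ) := by simpa [← PNat.coe_lt_coe] using hk
    rw [if_neg (by omega), smul_zero]

section Triangular

variable {S : Subalgebra ℂ (Module.End ℂ LambdaP)} {n : ℕ}

theorem phiCoeff_mem_of_D_mem (hD : ∀ k : ℕ+, (k : ℕ) ≤ n → D k ∈ S) {m : ℕ} (hm : m ≤ n) :
    phiCoeff m ∈ S := by
  induction m using Nat.strong_induction_on with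
  | _ m ih =>
  obtain rfl | hm0 := m.eq_zero_or_pos
  · simp [phiCoeff_zero]
  lift m to ℕ+ using hm0
  rw [← inv_smul_smul₀ (by simp : (m : ℂ) ≠ 0) (phiCoeff m), smul_phiCoeff_eq_sum]
  refine S.smul_mem (S.sum_mem fun k hk => S.smul_mem (S.mul_mem (ih _ ?_ ?_) (hD k ?_)) _) _
  all_goals
    have := k.pos
    have : (k : ℕ) ≤ m := by simpa [← PNat.coe_le_coe] using hk
    omega

theorem phiCoeff_mem_of_T_mem (hT : ∀ m, 1 ≤ m → m ≤ n → T m ∈ S) {m : ℕ} (hm : m ≤ n) :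
    phiCoeff m ∈ S := by
  obtain rfl | hm0 := m.eq_zero_or_pos
  · simp [phiCoeff_zero]
  have hc : (m.factorial : ℂ) ≠ 0 := by exact_mod_cast m.factorial_ne_zero
  rw [← inv_smul_smul₀ hc (phiCoeff m), ← T_eq_smul_phiCoeff]
  exact S.smul_mem (hT m hm0 hm) _

theorem D_mem_of_phiCoeff_mem (hC : ∀ m ≤ n, phiCoeff m ∈ S) {k : ℕ+} (hk : (k : ℕ) ≤ n) :
    D k ∈ S := by
  induction k using PNat.strongInductionOn with
  | _ k ih =>
  have hrec := smul_phiCoeff_eq_sum k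
  rw [Finset.Iic_eq_cons_Iio, Finset.sum_cons, Nat.sub_self, phiCoeff_zero, one_mul] at hrec
  rw [← inv_smul_smul₀ (by simp : (k : ℂ) ≠ 0) (D k), eq_sub_of_add_eq hrec.symm]
  refine S.smul_mem (S.sub_mem (S.smul_mem (hC _ hk) _)
    (S.sum_mem fun j hj => S.smul_mem (S.mul_mem (hC _ (by omega)) (ih j ?_ ?_)) _)) _
  · simpa using hj
  · have : (j : ℕ) < k := by simpa [← PNat.coe_lt_coe] using hj
    omega

end Triangular

theorem adjoin_D_eq_adjoin_T (n : ℕ) :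
    Algebra.adjoin ℂ {x : Module.End ℂ LambdaP | ∃ k : ℕ+, (k : ℕ) ≤ n ∧ x = D k} =
      Algebra.adjoin ℂ {x : Module.End ℂ LambdaP | ∃ k : ℕ, 1 ≤ k ∧ k ≤ n ∧ x = T k} := by
  refine le_antisymm (Algebra.adjoin_le ?_) (Algebra.adjoin_le ?_)
  · rintro _ ⟨k, hk, rfl⟩
    refine D_mem_of_phiCoeff_mem (fun m hm => phiCoeff_mem_of_T_mem ?_ hm) hk
    exact fun j hj hjn => Algebra.subset_adjoin ⟨j, hj, hjn, rfl⟩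
  · rintro _ ⟨m, -, hm, rfl⟩
    rw [T_eq_smul_phiCoeff]
    refine Subalgebra.smul_mem _ (phiCoeff_mem_of_D_mem ?_ hm) _
    exact fun k hk => Algebra.subset_adjoin ⟨k, hk, rfl⟩

/-- The unital ℂ-subalgebra of `End ℂ Λp` generated by the `∂/∂p_k` (`k ≥ 1`) equals
the one generated by the `T_n` (`n ≥ 1`); moreover for each `n ≥ 1` the subalgebras
generated by `{∂/∂p_1, …, ∂/∂p_n}` and `{T_1, …, T_n}` coincide. -/
theorem statement15 :
    Algebra.adjoin ℂ (Set.range D) =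
      Algebra.adjoin ℂ {x : Module.End ℂ LambdaP | ∃ n : ℕ, 1 ≤ n ∧ x = T n} ∧
    ∀ n : ℕ, 1 ≤ n →
      Algebra.adjoin ℂ {x : Module.End ℂ LambdaP | ∃ k : ℕ+, (k : ℕ) ≤ n ∧ x = D k} =
      Algebra.adjoin ℂ {x : Module.End ℂ LambdaP | ∃ k : ℕ, 1 ≤ k ∧ k ≤ n ∧ x = T k} := by
  refine ⟨le_antisymm (Algebra.adjoin_le ?_) (Algebra.adjoin_le ?_),
    fun n _ => adjoin_D_eq_adjoin_T n⟩
  · rintro _ ⟨k, rfl⟩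
    have hk := (adjoin_D_eq_adjoin_T k).le (Algebra.subset_adjoin ⟨k, le_rfl, rfl⟩)
    refine Algebra.adjoin_mono ?_ hk
    rintro _ ⟨m, hm, -, rfl⟩
    exact ⟨m, hm, rfl⟩
  · rintro _ ⟨n, hn, rfl⟩
    have hn := (adjoin_D_eq_adjoin_T n).ge (Algebra.subset_adjoin ⟨n, hn, le_rfl, rfl⟩)
    refine Algebra.adjoin_mono ?_ hn
    rintro _ ⟨k, -, rfl⟩
    exact ⟨k, rfl⟩
end

section
/- Fix an integer m ≥ 1 and for n ≥ 0 set S(n) = Σ_{k ≥ 0} z^k q^{m k^2} [n − (2m−1)(k−1) choose k]_q ∈ ℤ[z,q]. Then for every n ≥ 2m, S(n) = S(n−1) + z·q^{m+n−1}·S(n−2m). -/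
open MvPolynomial

/-- `S(n) = Σ_{k ≥ 0} z^k q^{m k²} [n - (2m-1)(k-1) choose k]_q`; all nonzero terms
have `k ≤ n`, so the sum may be truncated at `k = n`. -/
noncomputable def Spoly (m n : ℕ) : MvPolynomial (Fin 2) ℤ :=
  ∑ k ∈ Finset.range (n + 1),
    (X 0 : MvPolynomial (Fin 2) ℤ) ^ k * (X 1) ^ (m * k ^ 2) *
      gbinom (n - (2 * m - 1) * (k - 1)) k

lemma gbinom_zero (a b : ℕ) (h : a < b) : gbinom a b = 0 := by
  rw [gbinom, if_pos h]

lemma gbinom_zero_right (a : ℕ) : gbinom a 0 = 1 := by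
  rw [gbinom, if_neg (by omega)]
  simp

lemma gbinom_succ (c d : ℕ) :
    gbinom (c+1+d) (c+1) = gbinom (c+d) (c+1) +
      (X 1 : MvPolynomial (Fin 2) ℤ)^d * gbinom (c+d) c := by
  have h1 : c+1+d - (c+1) = d := by omega
  rw [gbinom, if_neg (by omega), h1]
  rw [← Finset.sum_filter_add_sum_filter_not _ (fun μ => μ 0 = d)]
  have partA : ∑ μ ∈ ((Fintype.piFinset fun _ : Fin (c+1) => Finset.range (d + 1)).filter
      (fun μ => ∀ i j : Fin (c+1), i ≤ j → μ j ≤ μ i)).filter (fun μ => μ 0 = d),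
      (X 1 : MvPolynomial (Fin 2) ℤ) ^ (∑ i, μ i)
      = (X 1 : MvPolynomial (Fin 2) ℤ)^d * gbinom (c+d) c := by
    rw [gbinom, if_neg (by omega), show c+d-c = d by omega, Finset.mul_sum]
    refine Finset.sum_nbij' (fun μ => Fin.tail μ) (fun ν => Fin.cons d ν) ?_ ?_ ?_ ?_ ?_
    · intro μ hμ
      simp only [Finset.mem_filter, Fintype.mem_piFinset, Finset.mem_range] at hμ ⊢
      obtain ⟨⟨hmem, hdec⟩, h0⟩ := hμ
      refine ⟨fun i => hmem _, fun i j hij => hdec i.succ j.succ (by simpa using hij)⟩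
    · intro ν hν
      simp only [Finset.mem_filter, Fintype.mem_piFinset, Finset.mem_range] at hν ⊢
      obtain ⟨hmem, hdec⟩ := hν
      refine ⟨⟨fun i => ?_, fun i j hij => ?_⟩, by simp⟩
      · refine Fin.cases ?_ ?_ i
        · simp
        · intro i'; simpa using hmem i'
      · revert hij
        refine Fin.cases ?_ (fun i' => ?_) i
        · refine Fin.cases ?_ (fun j' => ?_) j
          · intro _; exact le_refl _
          · intro _; simp only [Fin.cons_succ, Fin.cons_zero]
            exact Nat.lt_succ_iff.mp (hmem j')
        · refine Fin.cases ?_ (fun j' => ?_) j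
          · intro h; exact absurd h (by simp [Fin.le_def])
          · intro h; simp only [Fin.cons_succ]
            exact hdec i' j' (by simpa using h)
    · intro μ hμ
      simp only [Finset.mem_filter] at hμ
      rw [← hμ.2]
      exact Fin.cons_self_tail μ
    · intro ν hν
      exact Fin.tail_cons _ _
    · intro μ hμ
      simp only [Finset.mem_filter] at hμ
      rw [← pow_add]
      congr 1
      rw [Fin.sum_univ_succ, hμ.2]
      rfl
  have partB : ∑ μ ∈ ((Fintype.piFinset fun _ : Fin (c+1) => Finset.range (d + 1)).filter
      (fun μ => ∀ i j : Fin (c+1), i ≤ j → μ j ≤ μ i)).filter (fun μ => ¬ μ 0 = d),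
      (X 1 : MvPolynomial (Fin 2) ℤ) ^ (∑ i, μ i) = gbinom (c+d) (c+1) := by
    cases d with
    | zero =>
      rw [gbinom_zero _ _ (by omega)]
      convert Finset.sum_empty
      ext μ
      simp only [Finset.mem_filter, Fintype.mem_piFinset, Finset.mem_range,
        Finset.notMem_empty, iff_false, not_and]
      intro hmem h0
      have := hmem.1 0
      omega
    | succ e =>
      rw [gbinom, if_neg (by omega), show c+(e+1)-(c+1) = e by omega]
      apply Finset.sum_congr _ (fun _ _ => rfl)
      ext μ
      simp only [Finset.mem_filter, Fintype.mem_piFinset, Finset.mem_range]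
      constructor
      · rintro ⟨⟨hmem, hdec⟩, h0⟩
        refine ⟨fun i => ?_, hdec⟩
        have h1 := hdec 0 i (Fin.zero_le i)
        have h2 := hmem 0
        omega
      · rintro ⟨hmem, hdec⟩
        have h0 := hmem 0
        exact ⟨⟨fun i => by have := hmem i; omega, hdec⟩, by omega⟩
  rw [partA, partB]
  ring

lemma gbinom_sub (a b : ℕ) (hb : 1 ≤ b) (hab : b ≤ a) :
    gbinom a b = gbinom (a-1) b + (X 1 : MvPolynomial (Fin 2) ℤ)^(a-b) * gbinom (a-1) (b-1) := by
  obtain ⟨c, rfl⟩ : ∃ c, b = c + 1 := ⟨b-1, by omega⟩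
  obtain ⟨d, rfl⟩ : ∃ d, a = c + 1 + d := ⟨a - (c+1), by omega⟩
  have h1 : c+1+d-1 = c+d := by omega
  have h2 : c+1+d-(c+1) = d := by omega
  have h3 : c+1-1 = c := by omega
  rw [h1, h2, h3]
  exact gbinom_succ c d

lemma step (m n j : ℕ) (hm : 1 ≤ m) (hn : 2*m ≤ n) :
    (X 0 : MvPolynomial (Fin 2) ℤ)^(j+1) * (X 1)^(m*(j+1)^2) * gbinom (n - (2*m-1)*j) (j+1)
    = (X 0)^(j+1) * (X 1)^(m*(j+1)^2) * gbinom (n-1 - (2*m-1)*j) (j+1)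
      + (X 0)^(j+1) * (X 1)^(m+n-1+m*j^2) * gbinom (n-1-(2*m-1)*j) j := by
  by_cases h : j + 1 ≤ n - (2*m-1)*j
  · have hsub := gbinom_sub (n - (2*m-1)*j) (j+1) (by omega) h
    have ha1 : n - (2*m-1)*j - 1 = n - 1 - (2*m-1)*j := by
      generalize (2*m-1)*j = c; omega
    rw [hsub, ha1]
    simp only [Nat.add_sub_cancel]
    have hexp : m*(j+1)^2 + (n - (2*m-1)*j - (j+1)) = m+n-1+m*j^2 := by
      have hmj : (2*m-1)*j + j = 2*(m*j) := by
        have h2 : 2*m - 1 + 1 = 2*m := by omega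
        calc (2*m-1)*j + j = ((2*m-1)+1)*j := by ring
          _ = 2*m*j := by rw [h2]
          _ = 2*(m*j) := by ring
      have hsq : m*(j+1)^2 = m*j^2 + 2*(m*j) + m := by ring
      generalize (2*m-1)*j = c at h hmj ⊢
      generalize m*j^2 = A at hsq ⊢
      generalize m*(j+1)^2 = B at hsq ⊢
      generalize m*j = P at hsq hmj
      omega
    rw [← hexp, pow_add]
    ring
  · have hj : 1 ≤ j := by
      by_contra hj0
      have hj' : j = 0 := by omega
      subst hj'
      simp only [mul_zero, Nat.sub_zero] at h
      omega
    push_neg at h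
    rw [gbinom_zero (n - (2*m-1)*j) (j+1) h]
    rw [gbinom_zero (n - 1 - (2*m-1)*j) (j+1) (by generalize (2*m-1)*j = c at h ⊢; omega)]
    rw [gbinom_zero (n - 1 - (2*m-1)*j) j (by generalize (2*m-1)*j = c at h ⊢; omega)]
    ring

/-- For `n ≥ 2m`: `S(n) = S(n-1) + z q^{m+n-1} S(n-2m)` in `ℤ[z,q]`. -/
theorem statement17 (m : ℕ) (hm : 1 ≤ m) (n : ℕ) (hn : 2 * m ≤ n) :
    Spoly m n = Spoly m (n - 1) +
      (X 0 : MvPolynomial (Fin 2) ℤ) * (X 1) ^ (m + n - 1) * Spoly m (n - 2 * m) := by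
  have e1 : Spoly m (n - 1) = ∑ k ∈ Finset.range (n + 1),
      (X 0 : MvPolynomial (Fin 2) ℤ)^k * (X 1)^(m*k^2) *
        gbinom ((n-1) - (2*m-1)*(k-1)) k := by
    rw [Finset.sum_range_succ,
      gbinom_zero (n-1-(2*m-1)*(n-1)) n (lt_of_le_of_lt (Nat.sub_le _ _) (by omega)),
      mul_zero, add_zero, Spoly, show n-1+1 = n by omega]
  have e2 : (X 0 : MvPolynomial (Fin 2) ℤ) * (X 1)^(m+n-1) * Spoly m (n-2*m)
      = ∑ j ∈ Finset.range n,
        (X 0 : MvPolynomial (Fin 2) ℤ)^(j+1) * (X 1)^(m+n-1+m*j^2) *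
          gbinom (n-1-(2*m-1)*j) j := by
    rw [Spoly, Finset.mul_sum]
    rw [Finset.sum_subset (show Finset.range (n-2*m+1) ⊆ Finset.range n by
        intro x hx; simp only [Finset.mem_range] at hx ⊢; omega)]
    · refine Finset.sum_congr rfl (fun j _ => ?_)
      cases j with
      | zero => simp [gbinom_zero_right]
      | succ i =>
        have harg : (n-2*m) - (2*m-1)*((i+1)-1) = n-1-(2*m-1)*(i+1) := by
          have h1 : (2*m-1)*(i+1) = (2*m-1)*i + (2*m-1) := by ring
          rw [h1, show (i+1)-1 = i from rfl]
          generalize (2*m-1)*i = c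
          omega
        rw [harg, pow_add]
        ring
    · intro j hjmem hjns
      simp only [Finset.mem_range] at hjmem hjns
      have hj1 : n - 2*m + 1 ≤ j := by omega
      have hjpos : 1 ≤ j := by omega
      obtain ⟨t, rfl⟩ : ∃ t, n = 2*m + t := ⟨n - 2*m, by omega⟩
      have harg0 : (2*m+t-2*m) - (2*m-1)*(j-1) < j := by
        have e : (2*m-1)*(j-1) + (j-1) = 2*m*(j-1) := by
          have h2m : 2*m-1+1 = 2*m := by omega
          calc (2*m-1)*(j-1) + (j-1) = ((2*m-1)+1)*(j-1) := by ring
            _ = 2*m*(j-1) := by rw [h2m]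
        have ht2 : t ≤ 2*m*(j-1) := by
          calc t ≤ 2*m*t := Nat.le_mul_of_pos_left t (by omega)
            _ = 2*m*((t+1)-1) := by norm_num
            _ ≤ 2*m*(j-1) := Nat.mul_le_mul_left (2*m) (by omega)
        generalize (2*m-1)*(j-1) = B at e ⊢
        generalize 2*m*(j-1) = A at e ht2
        omega
      rw [gbinom_zero _ _ harg0]
      ring
  rw [e1, e2, Spoly, Finset.sum_range_succ', Finset.sum_range_succ'
    (fun k => (X 0 : MvPolynomial (Fin 2) ℤ)^k * (X 1)^(m*k^2) *
        gbinom ((n-1) - (2*m-1)*(k-1)) k) n]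
  have hstep : ∀ i ∈ Finset.range n,
      (X 0 : MvPolynomial (Fin 2) ℤ)^(i+1) * (X 1)^(m*(i+1)^2) *
        gbinom (n - (2*m-1)*((i+1)-1)) (i+1)
      = (X 0 : MvPolynomial (Fin 2) ℤ)^(i+1) * (X 1)^(m*(i+1)^2) *
          gbinom ((n-1) - (2*m-1)*((i+1)-1)) (i+1)
        + (X 0 : MvPolynomial (Fin 2) ℤ)^(i+1) * (X 1)^(m+n-1+m*i^2) *
            gbinom (n-1-(2*m-1)*i) i := by
    intro i _
    have := step m n i hm hn
    simpa using this
  rw [Finset.sum_congr rfl hstep, Finset.sum_add_distrib]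
  simp [gbinom_zero_right]
  ring
end
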